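/- arXiv:math/0403517 — 8 statements merged into one kernel-verified Lean document; each statement's English description precedes it below -/
import Mathlib

section
/- Assume H is continuous on Ω̄ × ℝ^d, convex and coercive in p, and H(x,0) ≤ 0 for all x ∈ Ω̄. Then for each fixed q ∈ ℝ^d, the map x ↦ ρ(x,q) = max_{H(x,p)=0}⟨p,q⟩ is upper semicontinuous on Ω̄. -/
open scoped RealInnerProductSpace

theorem stmt2 (d : ℕ) (hd : 0 < d) (Ω : Set (EuclideanSpace ℝ (Fin d)))
    (H : EuclideanSpace ℝ (Fin d) → EuclideanSpace ℝ (Fin d) → ℝ)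
    (hHcont : ContinuousOn
      (fun xp : EuclideanSpace ℝ (Fin d) × EuclideanSpace ℝ (Fin d) => H xp.1 xp.2)
      (closure Ω ×ˢ Set.univ))
    (hHconv : ∀ x ∈ closure Ω, ConvexOn ℝ Set.univ (H x))
    (α β : ℝ) (hα : 0 < α) (hβ : 0 < β)
    (hcoer : ∀ x ∈ closure Ω, ∀ p, α * ‖p‖ - β ≤ H x p)
    (hcompat : ∀ x ∈ closure Ω, H x 0 ≤ 0)
    (ρ : EuclideanSpace ℝ (Fin d) → EuclideanSpace ℝ (Fin d) → ℝ)
    (hρ : ∀ x ∈ closure Ω, ∀ q, ρ x q = sSup {r : ℝ | ∃ p, H x p = 0 ∧ r = ⟪p, q⟫})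
    (q : EuclideanSpace ℝ (Fin d)) :
    UpperSemicontinuousOn (fun x => ρ x q) (closure Ω) := by
  -- continuity of `H x ·` for fixed `x ∈ closure Ω`
  have hcont_x : ∀ x ∈ closure Ω, Continuous (fun p => H x p) := by
    intro x hx
    rw [← continuousOn_univ]
    exact hHcont.comp (f := fun p => (x, p)) (continuousOn_const.prodMk continuousOn_id)
      (fun p _ => ⟨hx, Set.mem_univ _⟩)
  -- the zero set is nonempty
  have hne : ∀ x ∈ closure Ω, ∃ p, H x p = 0 := by
    intro x hx
    by_cases h0 : H x 0 = 0
    · exact ⟨0, h0⟩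
    have hlt : H x 0 < 0 := lt_of_le_of_ne (hcompat x hx) h0
    set u : EuclideanSpace ℝ (Fin d) := EuclideanSpace.single ⟨0, hd⟩ 1 with hu_def
    have hu : ‖u‖ = 1 := by simp [hu_def]
    set T : ℝ := (β + 1) / α with hT_def
    have hT : 0 ≤ T := by positivity
    have hgT : 0 ≤ H x (T • u) := by
      have h1 := hcoer x hx (T • u)
      have hn : ‖T • u‖ = T := by
        rw [norm_smul, hu, mul_one, Real.norm_eq_abs, abs_of_nonneg hT]
      rw [hn] at h1
      have hTval : α * T = β + 1 := by
        rw [hT_def]; field_simp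
      linarith
    have hc : ContinuousOn (fun t : ℝ => H x (t • u)) (Set.Icc 0 T) :=
      ((hcont_x x hx).comp (continuous_id.smul continuous_const)).continuousOn
    have h0mem : (0:ℝ) ∈ Set.Icc (H x ((0:ℝ) • u)) (H x (T • u)) := by
      rw [zero_smul]
      exact ⟨le_of_lt hlt, hgT⟩
    obtain ⟨t, _, ht⟩ := intermediate_value_Icc hT hc h0mem
    exact ⟨t • u, ht⟩
  -- the zero set is bounded, so the value set is bounded above
  have hbdd : ∀ x ∈ closure Ω,
      BddAbove {r : ℝ | ∃ p, H x p = 0 ∧ r = ⟪p, q⟫} := by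
    intro x hx
    refine ⟨(β/α) * ‖q‖, ?_⟩
    rintro r ⟨p, hp, rfl⟩
    have h1 := hcoer x hx p
    rw [hp] at h1
    have hpn : ‖p‖ ≤ β / α := by
      rw [le_div_iff₀ hα]; nlinarith
    calc ⟪p, q⟫ ≤ ‖p‖ * ‖q‖ := real_inner_le_norm p q
      _ ≤ (β/α) * ‖q‖ := by
          have := norm_nonneg q
          nlinarith
  intro x hx r hr
  simp only [hρ x hx q] at hr
  by_contra hcon
  rw [Filter.not_eventually] at hcon
  have hfreq : ∃ᶠ y in nhdsWithin x (closure Ω), y ∈ closure Ω ∧ r ≤ ρ y q := by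
    refine (hcon.and_eventually self_mem_nhdsWithin).mono ?_
    rintro y ⟨hy1, hy2⟩
    exact ⟨hy2, not_lt.mp hy1⟩
  obtain ⟨u, hu_tendsto, hu_prop⟩ := Filter.exists_seq_forall_of_frequently hfreq
  have huΩ : ∀ n, u n ∈ closure Ω := fun n => (hu_prop n).1
  have hρx : ρ x q = sSup {r : ℝ | ∃ p, H x p = 0 ∧ r = ⟪p, q⟫} := hρ x hx q
  set m : ℝ := sSup {r : ℝ | ∃ p, H x p = 0 ∧ r = ⟪p, q⟫} with hm_def
  set ε : ℝ := (r - m) / 2 with hε_def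
  have hε : 0 < ε := by
    have : m < r := hr
    rw [hε_def]; linarith
  have hpick : ∀ n, ∃ p, H (u n) p = 0 ∧ r - ε < ⟪p, q⟫ := by
    intro n
    have hSn : {r' : ℝ | ∃ p, H (u n) p = 0 ∧ r' = ⟪p, q⟫}.Nonempty := by
      obtain ⟨p, hp⟩ := hne (u n) (huΩ n)
      exact ⟨⟪p, q⟫, p, hp, rfl⟩
    have hlt : r - ε < sSup {r' : ℝ | ∃ p, H (u n) p = 0 ∧ r' = ⟪p, q⟫} := by
      have h2 := (hu_prop n).2
      rw [hρ (u n) (huΩ n) q] at h2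
      linarith
    obtain ⟨r', hr'mem, hr'⟩ := exists_lt_of_lt_csSup hSn hlt
    obtain ⟨p, hp0, rfl⟩ := hr'mem
    exact ⟨p, hp0, hr'⟩
  choose P hP0 hPq using hpick
  have hPball : ∀ n, P n ∈ Metric.closedBall (0 : EuclideanSpace ℝ (Fin d)) (β/α) := by
    intro n
    rw [Metric.mem_closedBall, dist_zero_right]
    have h1 := hcoer (u n) (huΩ n) (P n)
    rw [hP0 n] at h1
    rw [le_div_iff₀ hα]; nlinarith
  obtain ⟨p, hpball, φ, hφ, hconv⟩ :=
    (isCompact_closedBall (0 : EuclideanSpace ℝ (Fin d)) (β/α)).tendsto_subseq hPball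
  have hxp_mem : (x, p) ∈ closure Ω ×ˢ (Set.univ : Set (EuclideanSpace ℝ (Fin d))) :=
    ⟨hx, trivial⟩
  have hu' : Filter.Tendsto (fun n => u (φ n)) Filter.atTop (nhds x) :=
    (hu_tendsto.mono_right nhdsWithin_le_nhds).comp hφ.tendsto_atTop
  have hseq_tendsto : Filter.Tendsto (fun n => (u (φ n), P (φ n))) Filter.atTop
      (nhdsWithin (x, p) (closure Ω ×ˢ Set.univ)) := by
    apply tendsto_nhdsWithin_of_tendsto_nhds_of_eventually_within
    · exact hu'.prodMk_nhds hconv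
    · exact Filter.Eventually.of_forall (fun n => ⟨huΩ (φ n), trivial⟩)
  have hH0 : H x p = 0 := by
    have h1 : Filter.Tendsto (fun n => H (u (φ n)) (P (φ n))) Filter.atTop (nhds (H x p)) :=
      ((hHcont (x, p) hxp_mem).tendsto).comp hseq_tendsto
    have h2 : (fun n => H (u (φ n)) (P (φ n))) = fun _ => (0:ℝ) :=
      funext fun n => hP0 (φ n)
    rw [h2] at h1
    exact (tendsto_nhds_unique h1 tendsto_const_nhds)
  have hinner : Filter.Tendsto (fun n => ⟪P (φ n), q⟫) Filter.atTop (nhds ⟪p, q⟫) :=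
    ((continuous_id.inner continuous_const).tendsto p).comp hconv
  have hge : r - ε ≤ ⟪p, q⟫ :=
    ge_of_tendsto hinner (Filter.Eventually.of_forall fun n => le_of_lt (hPq (φ n)))
  have hle : ⟪p, q⟫ ≤ m := le_csSup (hbdd x hx) ⟨p, hH0, rfl⟩
  have : m < r := hr
  rw [hε_def] at hge
  linarith
end

section
/- Assume H is continuous on Ω̄ × ℝ^d, convex and coercive in p, and H(x,0) < 0 for all x ∈ Ω. Then for each fixed q ∈ ℝ^d, the map x ↦ ρ(x,q) is lower semicontinuous (hence, combined with upper semicontinuity, continuous) on the open set Ω. -/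
open scoped RealInnerProductSpace

theorem stmt4 (d : ℕ) (hd : 0 < d) (Ω : Set (EuclideanSpace ℝ (Fin d)))
    (hΩ : IsOpen Ω) (hΩb : Bornology.IsBounded Ω)
    (H : EuclideanSpace ℝ (Fin d) → EuclideanSpace ℝ (Fin d) → ℝ)
    (hHcont : ContinuousOn
      (fun xp : EuclideanSpace ℝ (Fin d) × EuclideanSpace ℝ (Fin d) => H xp.1 xp.2)
      (closure Ω ×ˢ Set.univ))
    (hHconv : ∀ x ∈ closure Ω, ConvexOn ℝ Set.univ (H x))
    (α β : ℝ) (hα : 0 < α) (hβ : 0 < β)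
    (hcoer : ∀ x ∈ closure Ω, ∀ p, α * ‖p‖ - β ≤ H x p)
    (hcompat : ∀ x ∈ closure Ω, H x 0 ≤ 0)
    (hcompat' : ∀ x ∈ Ω, H x 0 < 0)
    (ρ : EuclideanSpace ℝ (Fin d) → EuclideanSpace ℝ (Fin d) → ℝ)
    (hρ : ∀ x ∈ closure Ω, ∀ q, ρ x q = sSup {r : ℝ | ∃ p, H x p = 0 ∧ r = ⟪p, q⟫})
    (q : EuclideanSpace ℝ (Fin d)) :
    LowerSemicontinuousOn (fun x => ρ x q) Ω ∧ ContinuousOn (fun x => ρ x q) Ω := by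
  have hM0 : 0 < β / α := div_pos hβ hα
  set M : ℝ := β / α with hM
  -- continuity of H x in p for fixed x in closure Ω
  have hHx : ∀ x ∈ closure Ω, Continuous fun p : EuclideanSpace ℝ (Fin d) => H x p := by
    intro x hx
    have h1 : ContinuousOn (fun p : EuclideanSpace ℝ (Fin d) => H x p) Set.univ := by
      have h2 : ContinuousOn
          (fun p : EuclideanSpace ℝ (Fin d) => ((x, p) : EuclideanSpace ℝ (Fin d) × EuclideanSpace ℝ (Fin d)))
          Set.univ := Continuous.continuousOn (by fun_prop)
      exact hHcont.comp h2 (fun p _ => ⟨hx, trivial⟩)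
    exact continuousOn_univ.1 h1
  -- bound on sublevel sets
  have hbd : ∀ x ∈ closure Ω, ∀ p, H x p ≤ 0 → ‖p‖ ≤ M := by
    intro x hx p hp
    have h := hcoer x hx p
    rw [hM, le_div_iff₀ hα, mul_comm]
    linarith
  set A : EuclideanSpace ℝ (Fin d) → Set ℝ :=
    fun x => {r : ℝ | ∃ p, H x p = 0 ∧ r = ⟪p, q⟫} with hA
  have hbddA : ∀ x ∈ closure Ω, ∀ r ∈ A x, r ≤ M * ‖q‖ := by
    rintro x hx r ⟨p, hp, rfl⟩
    calc ⟪p, q⟫ ≤ ‖p‖ * ‖q‖ := real_inner_le_norm p q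
      _ ≤ M * ‖q‖ := mul_le_mul_of_nonneg_right (hbd x hx p hp.le) (norm_nonneg q)
  -- IVT along a unit direction
  have hIVT : ∀ x ∈ closure Ω, ∀ p₀ u : EuclideanSpace ℝ (Fin d), ‖u‖ = 1 → H x p₀ ≤ 0 →
      ∃ t : ℝ, 0 ≤ t ∧ H x (p₀ + t • u) = 0 := by
    intro x hx p₀ u hu hp₀
    set T : ℝ := (β + α * ‖p₀‖ + 1) / α with hT
    have hT0 : 0 ≤ T := by positivity
    have hcont : ContinuousOn (fun t : ℝ => H x (p₀ + t • u)) (Set.Icc 0 T) :=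
      ((hHx x hx).comp (by fun_prop)).continuousOn
    have hend : 0 < H x (p₀ + T • u) := by
      have h1 := hcoer x hx (p₀ + T • u)
      have h2 : T - ‖p₀‖ ≤ ‖p₀ + T • u‖ := by
        have h := norm_add_le (p₀ + T • u) (-p₀)
        have heq : p₀ + T • u + -p₀ = T • u := by abel
        rw [heq, norm_smul, Real.norm_eq_abs, abs_of_nonneg hT0, hu, mul_one, norm_neg] at h
        linarith
      have h3 := mul_le_mul_of_nonneg_left h2 hα.le
      have h4 : α * T = β + α * ‖p₀‖ + 1 := by
        rw [hT]; field_simp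
      nlinarith
    have hmem : (0:ℝ) ∈ Set.Icc (H x (p₀ + (0:ℝ) • u)) (H x (p₀ + T • u)) := by
      constructor
      · simpa using hp₀
      · exact hend.le
    obtain ⟨t, ht, hteq⟩ := intermediate_value_Icc hT0 hcont hmem
    exact ⟨t, ht.1, hteq⟩
  -- key comparison: anything in the sublevel set has inner product ≤ ρ
  have hAle : ∀ x ∈ closure Ω, ∀ p, H x p ≤ 0 → ⟪p, q⟫ ≤ ρ x q := by
    intro x hx p hp
    obtain ⟨u, hunorm, huq⟩ : ∃ u : EuclideanSpace ℝ (Fin d), ‖u‖ = 1 ∧ 0 ≤ ⟪u, q⟫ := by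
      by_cases hq : q = 0
      · exact ⟨EuclideanSpace.single ⟨0, hd⟩ (1:ℝ), by simp [EuclideanSpace.norm_single],
          by simp [hq]⟩
      · refine ⟨‖q‖⁻¹ • q, ?_, ?_⟩
        · rw [norm_smul, norm_inv, norm_norm, inv_mul_cancel₀ (norm_ne_zero_iff.2 hq)]
        · rw [real_inner_smul_left, real_inner_self_eq_norm_sq]
          positivity
    obtain ⟨t, ht0, hteq⟩ := hIVT x hx p u hunorm hp
    have hmem : (⟪p, q⟫ + t * ⟪u, q⟫ : ℝ) ∈ A x :=
      ⟨p + t • u, hteq, by rw [inner_add_left, real_inner_smul_left]⟩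
    have hb : BddAbove (A x) := ⟨M * ‖q‖, fun r hr => hbddA x hx r hr⟩
    have hle := le_csSup hb hmem
    rw [hρ x hx q]
    nlinarith [mul_nonneg ht0 huq]
  -- nonemptiness of A x
  have hAne : ∀ x ∈ closure Ω, (A x).Nonempty := by
    intro x hx
    obtain ⟨t, ht0, hteq⟩ := hIVT x hx 0 (EuclideanSpace.single ⟨0, hd⟩ (1:ℝ))
      (by simp [EuclideanSpace.norm_single]) (hcompat x hx)
    exact ⟨_, _, hteq, rfl⟩
  have hρub : ∀ x ∈ closure Ω, ρ x q ≤ M * ‖q‖ := by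
    intro x hx
    rw [hρ x hx q]
    exact csSup_le (hAne x hx) (fun r hr => hbddA x hx r hr)
  have hρ0 : ∀ x ∈ closure Ω, 0 ≤ ρ x q := by
    intro x hx
    have h := hAle x hx 0 (hcompat x hx)
    simpa using h
  -- the scaling estimate
  have hkey : ∀ y ∈ closure Ω, ∀ z ∈ closure Ω, ∀ γ ε : ℝ, 0 < γ → 0 < ε →
      H z 0 ≤ -γ → (∀ p, ‖p‖ ≤ M → H z p ≤ H y p + ε) →
      ρ y q ≤ ((γ + ε) / γ) * ρ z q := by
    intro y hy z hz γ ε hγ hε hz0 hcomp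
    rw [hρ y hy q]
    apply csSup_le (hAne y hy)
    rintro r ⟨p, hp, rfl⟩
    set t : ℝ := γ / (γ + ε) with ht
    have ht0 : 0 < t := by positivity
    have ht1 : t ≤ 1 := by
      rw [ht, div_le_one (by linarith)]; linarith
    have hpM : ‖p‖ ≤ M := hbd y hy p hp.le
    have hzp : H z p ≤ ε := by have := hcomp p hpM; linarith [hp.le]
    have hconv := (hHconv z hz).2 (Set.mem_univ p) (Set.mem_univ 0) ht0.le
      (by linarith : (0:ℝ) ≤ 1 - t) (by ring)
    have htp : H z (t • p) ≤ 0 := by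
      have heq : t • p + (1 - t) • (0:EuclideanSpace ℝ (Fin d)) = t • p := by simp
      rw [heq, smul_eq_mul, smul_eq_mul] at hconv
      have h5 : t * H z p + (1 - t) * H z 0 ≤ t * ε + (1 - t) * (-γ) := by
        have h1 := mul_le_mul_of_nonneg_left hzp ht0.le
        have h2 := mul_le_mul_of_nonneg_left hz0 (by linarith : (0:ℝ) ≤ 1 - t)
        linarith
      have ht' : t * ε + (1 - t) * (-γ) = 0 := by
        rw [ht]; field_simp; ring
      linarith
    have hle := hAle z hz (t • p) htp
    rw [real_inner_smul_left] at hle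
    have : ⟪p, q⟫ ≤ ρ z q / t := by
      rw [le_div_iff₀ ht0]; linarith [hle]
    calc ⟪p, q⟫ ≤ ρ z q / t := this
      _ = ((γ + ε) / γ) * ρ z q := by
          rw [ht]; field_simp
  -- uniform continuity of H on closure Ω × ball
  have hucont : ∀ ε > (0:ℝ), ∃ δ > (0:ℝ), ∀ x ∈ closure Ω, ∀ x' ∈ closure Ω,
      dist x x' < δ → ∀ p : EuclideanSpace ℝ (Fin d), ‖p‖ ≤ M → |H x p - H x' p| < ε := by
    intro ε hε
    have hcpt : IsCompact (closure Ω ×ˢ Metric.closedBall (0:EuclideanSpace ℝ (Fin d)) M) :=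
      hΩb.isCompact_closure.prod (isCompact_closedBall 0 M)
    have hc : ContinuousOn
        (fun xp : EuclideanSpace ℝ (Fin d) × EuclideanSpace ℝ (Fin d) => H xp.1 xp.2)
        (closure Ω ×ˢ Metric.closedBall 0 M) :=
      hHcont.mono (Set.prod_mono_right (Set.subset_univ _))
    have hu := hcpt.uniformContinuousOn_of_continuous hc
    rw [Metric.uniformContinuousOn_iff] at hu
    obtain ⟨δ, hδ0, hδ⟩ := hu ε hε
    refine ⟨δ, hδ0, fun x hx x' hx' hdist p hpM => ?_⟩
    have h1 : ((x, p) : EuclideanSpace ℝ (Fin d) × EuclideanSpace ℝ (Fin d))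
        ∈ closure Ω ×ˢ Metric.closedBall 0 M :=
      ⟨hx, by simpa [Metric.mem_closedBall, dist_eq_norm] using hpM⟩
    have h2 : ((x', p) : EuclideanSpace ℝ (Fin d) × EuclideanSpace ℝ (Fin d))
        ∈ closure Ω ×ˢ Metric.closedBall 0 M :=
      ⟨hx', by simpa [Metric.mem_closedBall, dist_eq_norm] using hpM⟩
    have hd2 : dist ((x, p) : EuclideanSpace ℝ (Fin d) × EuclideanSpace ℝ (Fin d)) (x', p) < δ := by
      rw [Prod.dist_eq]
      simp only [dist_self]
      exact max_lt hdist (by simpa using hdist |>.trans_le le_rfl |> fun _ => hδ0)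
    have := hδ _ h1 _ h2 hd2
    rwa [Real.dist_eq] at this
  -- continuity
  have hcont : ContinuousOn (fun x => ρ x q) Ω := by
    intro x₀ hx₀
    have hx₀c : x₀ ∈ closure Ω := subset_closure hx₀
    rw [Metric.continuousWithinAt_iff]
    intro η hη
    set c : ℝ := -H x₀ 0 with hc
    have hc0 : 0 < c := by
      have := hcompat' x₀ hx₀; rw [hc]; linarith
    set K : ℝ := M * ‖q‖ with hK
    have hK0 : 0 ≤ K := by positivity
    set ε : ℝ := min (c / 2) (c * η / (4 * (K + 1))) with hε
    have hε0 : 0 < ε := lt_min (by positivity) (by positivity)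
    have hεc : ε ≤ c / 2 := min_le_left _ _
    have hεη : ε ≤ c * η / (4 * (K + 1)) := min_le_right _ _
    obtain ⟨δ, hδ0, hδ⟩ := hucont ε hε0
    refine ⟨δ, hδ0, fun x hx hdist => ?_⟩
    have hxc : x ∈ closure Ω := subset_closure hx
    have hcomp : ∀ p : EuclideanSpace ℝ (Fin d), ‖p‖ ≤ M → |H x p - H x₀ p| < ε :=
      hδ x hxc x₀ hx₀c hdist
    -- upper bound: ρ x q ≤ ((c+ε)/c) ρ x₀ q
    have husc : ρ x q ≤ ((c + ε) / c) * ρ x₀ q := by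
      apply hkey x hxc x₀ hx₀c c ε hc0 hε0 (by rw [hc]; linarith)
      intro p hpM
      have := hcomp p hpM
      have := abs_lt.1 this
      linarith [this.1]
    -- lower bound
    have hx00 : H x 0 ≤ -(c - ε) := by
      have h0 := hcomp 0 (by simp; positivity)
      have := abs_lt.1 h0
      have hx₀0 : H x₀ 0 = -c := by rw [hc]; ring
      linarith [this.2]
    have hcε : 0 < c - ε := by linarith
    have hlsc : ρ x₀ q ≤ (c / (c - ε)) * ρ x q := by
      have h := hkey x₀ hx₀c x hxc (c - ε) ε hcε hε0 hx00 ?_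
      · have heq : c - ε + ε = c := by ring
        rwa [heq] at h
      · intro p hpM
        have := abs_lt.1 (hcomp p hpM)
        linarith [this.2]
    -- combine
    have hbx : ρ x q ≤ K := hρub x hxc
    have hbx₀ : ρ x₀ q ≤ K := hρub x₀ hx₀c
    have hnx : 0 ≤ ρ x q := hρ0 x hxc
    have hnx₀ : 0 ≤ ρ x₀ q := hρ0 x₀ hx₀c
    have h1 : c * ρ x q ≤ (c + ε) * ρ x₀ q := by
      have := mul_le_mul_of_nonneg_left husc hc0.le
      calc c * ρ x q ≤ c * (((c + ε) / c) * ρ x₀ q) := this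
        _ = (c + ε) * ρ x₀ q := by field_simp
    have h2 : (c - ε) * ρ x₀ q ≤ c * ρ x q := by
      have := mul_le_mul_of_nonneg_left hlsc hcε.le
      calc (c - ε) * ρ x₀ q ≤ (c - ε) * ((c / (c - ε)) * ρ x q) := this
        _ = c * ρ x q := by field_simp
    have hεK : ε * K ≤ c * η / 4 := by
      have h3 : ε * K ≤ (c * η / (4 * (K + 1))) * K :=
        mul_le_mul_of_nonneg_right hεη hK0
      have h4 : (c * η / (4 * (K + 1))) * K ≤ c * η / 4 := by
        rw [div_mul_eq_mul_div, div_le_div_iff₀ (by positivity) (by positivity)]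
        nlinarith
      linarith
    have e1 : ε * ρ x₀ q ≤ ε * K := mul_le_mul_of_nonneg_left hbx₀ hε0.le
    have hcη : 0 < c * η := by positivity
    clear_value M A c K ε
    rw [Real.dist_eq, abs_sub_lt_iff]
    constructor
    · -- ρ x q - ρ x₀ q < η
      have hg1 : c * (ρ x q - ρ x₀ q) < c * η := by linarith [h1, e1, hεK, hcη]
      exact (mul_lt_mul_iff_right₀ hc0).1 hg1
    · -- ρ x₀ q - ρ x q < η
      have hg2 : c * (ρ x₀ q - ρ x q) < c * η := by linarith [h2, e1, hεK, hcη]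
      exact (mul_lt_mul_iff_right₀ hc0).1 hg2
  exact ⟨hcont.lowerSemicontinuousOn, hcont⟩
end

section
/- Discrete comparison principle: assume ρ(x_h, q) > 0 for every interior node x_h and every q ≠ 0. Let u_h, v_h ∈ V_h satisfy u_h ≤ Λ_h u_h (discrete subsolution) and v_h ≥ Λ_h v_h (discrete supersolution). If u_h ≤ v_h on all boundary nodes, then u_h ≤ v_h on all of Ω̄. -/
open scoped RealInnerProductSpace
open Classical

/-- The boundary of the simplicial star of a node `x`: the union, over all simplices
`s` of the triangulation `T` containing `x`, of the convex hulls of the opposite faces. -/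
noncomputable def starBdry (d : ℕ) (T : Finset (Finset (EuclideanSpace ℝ (Fin d))))
    (x : EuclideanSpace ℝ (Fin d)) : Set (EuclideanSpace ℝ (Fin d)) :=
  ⋃ s ∈ {s : Finset (EuclideanSpace ℝ (Fin d)) | s ∈ T ∧ x ∈ s},
    convexHull ℝ ((s : Set (EuclideanSpace ℝ (Fin d))) \ {x})

/-- The Hopf–Lax update operator: at an interior node `x` it takes the minimum of
`u y + ρ x (x - y)` over the boundary of the simplicial star of `x`; elsewhere it is
the identity. -/
noncomputable def hopfLax (d : ℕ) (T : Finset (Finset (EuclideanSpace ℝ (Fin d))))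
    (intr : Finset (EuclideanSpace ℝ (Fin d)))
    (ρ : EuclideanSpace ℝ (Fin d) → EuclideanSpace ℝ (Fin d) → ℝ)
    (u : EuclideanSpace ℝ (Fin d) → ℝ) (x : EuclideanSpace ℝ (Fin d)) : ℝ :=
  if x ∈ intr then sInf ((fun y => u y + ρ x (x - y)) '' starBdry d T x) else u x

/-- A continuous function that is affine on each simplex of the triangulation `T`
(a linear finite-element function). -/
def IsPL (d : ℕ) (T : Finset (Finset (EuclideanSpace ℝ (Fin d))))
    (u : EuclideanSpace ℝ (Fin d) → ℝ) : Prop :=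
  Continuous u ∧ ∀ s ∈ T, ∃ f : EuclideanSpace ℝ (Fin d) →ᵃ[ℝ] ℝ,
    ∀ y ∈ convexHull ℝ (s : Set (EuclideanSpace ℝ (Fin d))), u y = f y

private lemma affine_sum_eval {d : ℕ} (f : EuclideanSpace ℝ (Fin d) →ᵃ[ℝ] ℝ)
    (t : Finset (EuclideanSpace ℝ (Fin d))) (w : EuclideanSpace ℝ (Fin d) → ℝ)
    (hw : ∑ z ∈ t, w z = 1) :
    f (∑ z ∈ t, w z • z) = ∑ z ∈ t, w z * f z := by
  have h1 : (∑ z ∈ t, w z • z) = t.affineCombination ℝ id w := by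
    rw [Finset.affineCombination_eq_linear_combination t id w hw]; simp
  rw [h1, Finset.map_affineCombination t id w hw f,
    Finset.affineCombination_eq_linear_combination _ _ _ hw]
  simp [smul_eq_mul]

private lemma sum_eq_on_support {α : Type*} {t : Finset α} {w a : α → ℝ} {M : ℝ}
    (hw0 : ∀ z ∈ t, 0 ≤ w z) (hw1 : ∑ z ∈ t, w z = 1)
    (ha : ∀ z ∈ t, 0 < w z → a z ≤ M) (hsum : M ≤ ∑ z ∈ t, w z * a z) :
    ∀ z ∈ t, 0 < w z → a z = M := by
  have hterm : ∀ z ∈ t, w z * a z ≤ w z * M := by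
    intro z hz
    rcases (hw0 z hz).eq_or_lt with h | h
    · rw [← h]; simp
    · exact mul_le_mul_of_nonneg_left (ha z hz h) (le_of_lt h)
  have h2 : ∑ z ∈ t, w z * M = M := by rw [← Finset.sum_mul, hw1, one_mul]
  have h1 : ∑ z ∈ t, w z * a z ≤ M := h2 ▸ Finset.sum_le_sum hterm
  have heq : ∑ z ∈ t, w z * a z = ∑ z ∈ t, w z * M := by rw [h2]; linarith
  have := (Finset.sum_eq_sum_iff_of_le hterm).1 heq
  intro z hz hpos
  exact mul_left_cancel₀ (ne_of_gt hpos) (this z hz)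

private lemma variance_pos {d : ℕ} (t : Finset (EuclideanSpace ℝ (Fin d)))
    (w : EuclideanSpace ℝ (Fin d) → ℝ) (x0 : EuclideanSpace ℝ (Fin d))
    (hw0 : ∀ z ∈ t, 0 ≤ w z) (hw1 : ∑ z ∈ t, w z = 1)
    (hx : ∑ z ∈ t, w z • z = x0) (hne : ∀ z ∈ t, z ≠ x0)
    (hnorm : ∀ z ∈ t, 0 < w z → ‖z‖ ≤ ‖x0‖) : False := by
  have h2 : (∑ z ∈ t, w z * ⟪z, x0⟫) = ‖x0‖ ^ 2 := by
    calc (∑ z ∈ t, w z * ⟪z, x0⟫) = ∑ z ∈ t, ⟪w z • z, x0⟫ := by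
          simp_rw [real_inner_smul_left]
      _ = ⟪∑ z ∈ t, w z • z, x0⟫ := (sum_inner (𝕜 := ℝ) t (fun z => w z • z) x0).symm
      _ = ⟪x0, x0⟫ := by rw [hx]
      _ = ‖x0‖ ^ 2 := real_inner_self_eq_norm_sq x0
  have key : ∑ z ∈ t, w z * ‖z - x0‖ ^ 2 = (∑ z ∈ t, w z * ‖z‖ ^ 2) - ‖x0‖ ^ 2 := by
    calc ∑ z ∈ t, w z * ‖z - x0‖ ^ 2
        = ∑ z ∈ t, (w z * ‖z‖ ^ 2 - 2 * (w z * ⟪z, x0⟫) + w z * ‖x0‖ ^ 2) := by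
          refine Finset.sum_congr rfl fun z hz => ?_
          rw [norm_sub_sq_real]; ring
      _ = (∑ z ∈ t, w z * ‖z‖ ^ 2) - 2 * (∑ z ∈ t, w z * ⟪z, x0⟫)
            + (∑ z ∈ t, w z) * ‖x0‖ ^ 2 := by
          rw [Finset.sum_add_distrib, Finset.sum_sub_distrib, Finset.mul_sum, Finset.sum_mul]
      _ = (∑ z ∈ t, w z * ‖z‖ ^ 2) - ‖x0‖ ^ 2 := by rw [h2, hw1]; ring
  have hle : ∑ z ∈ t, w z * ‖z - x0‖ ^ 2 ≤ 0 := by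
    have hb : ∑ z ∈ t, w z * ‖z‖ ^ 2 ≤ ∑ z ∈ t, w z * ‖x0‖ ^ 2 := by
      refine Finset.sum_le_sum fun z hz => ?_
      rcases (hw0 z hz).eq_or_lt with h | h
      · rw [← h]; simp
      · exact mul_le_mul_of_nonneg_left
          (pow_le_pow_left₀ (norm_nonneg z) (hnorm z hz h) 2) (le_of_lt h)
    have hs : ∑ z ∈ t, w z * ‖x0‖ ^ 2 = ‖x0‖ ^ 2 := by rw [← Finset.sum_mul, hw1, one_mul]
    rw [key]; linarith
  have hpos : ∃ z ∈ t, 0 < w z := by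
    by_contra h
    push_neg at h
    have := Finset.sum_nonpos h
    linarith
  obtain ⟨z0, hz0, hz0pos⟩ := hpos
  have hgt : 0 < ∑ z ∈ t, w z * ‖z - x0‖ ^ 2 := by
    refine Finset.sum_pos' (fun z hz => mul_nonneg (hw0 z hz) (by positivity)) ⟨z0, hz0, ?_⟩
    have : 0 < ‖z0 - x0‖ := norm_pos_iff.mpr (sub_ne_zero.mpr (hne z0 hz0))
    positivity
  linarith

/-- Discrete comparison principle for the Hopf–Lax finite-element scheme. -/
theorem stmt12 (d : ℕ)
    (T : Finset (Finset (EuclideanSpace ℝ (Fin d))))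
    (nodes intr : Finset (EuclideanSpace ℝ (Fin d))) (hintr : intr ⊆ nodes)
    (hnodes : ∀ s ∈ T, ∀ x ∈ s, x ∈ nodes)
    (hstar : ∀ x ∈ intr, ∃ s ∈ T, x ∈ s ∧ ∃ y ∈ s, y ≠ x)
    (ρ : EuclideanSpace ℝ (Fin d) → EuclideanSpace ℝ (Fin d) → ℝ)
    (hρc : ∀ x, Continuous (ρ x))
    (hρpos : ∀ x ∈ intr, ∀ q : EuclideanSpace ℝ (Fin d), q ≠ 0 → 0 < ρ x q)
    (u v : EuclideanSpace ℝ (Fin d) → ℝ) (hu : IsPL d T u) (hv : IsPL d T v)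
    (hsub : ∀ x ∈ nodes, u x ≤ hopfLax d T intr ρ u x)
    (hsup : ∀ x ∈ nodes, hopfLax d T intr ρ v x ≤ v x)
    (hbc : ∀ x ∈ nodes, x ∉ intr → u x ≤ v x) :
    ∀ x ∈ ⋃ s ∈ (T : Set (Finset (EuclideanSpace ℝ (Fin d)))),
      convexHull ℝ (s : Set (EuclideanSpace ℝ (Fin d))), u x ≤ v x := by
  have key : ∀ x ∈ nodes, u x ≤ v x := by
    by_contra hcon
    push_neg at hcon
    obtain ⟨x₁, hx₁n, hx₁⟩ := hcon
    obtain ⟨b, hbmem, hbmax⟩ := nodes.exists_max_image (fun z => u z - v z) ⟨x₁, hx₁n⟩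
    set M := u b - v b with hM
    have hMpos : 0 < M := lt_of_lt_of_le (sub_pos.mpr hx₁) (hbmax x₁ hx₁n)
    set S := nodes.filter (fun z => u z - v z = M) with hSdef
    have hbS : b ∈ S := Finset.mem_filter.mpr ⟨hbmem, rfl⟩
    obtain ⟨c, hcmem, hcmin⟩ := S.exists_min_image v ⟨b, hbS⟩
    set m := v c with hm
    set S' := S.filter (fun z => v z = m) with hS'def
    obtain ⟨x0, hx0mem, hx0max⟩ :=
      S'.exists_max_image (fun z => ‖z‖) ⟨c, Finset.mem_filter.mpr ⟨hcmem, rfl⟩⟩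
    obtain ⟨hx0S, hx0m⟩ := Finset.mem_filter.mp hx0mem
    obtain ⟨hx0nodes, hx0M⟩ := Finset.mem_filter.mp hx0S
    have hx0intr : x0 ∈ intr := by
      by_contra h
      have := hbc x0 hx0nodes h
      linarith
    -- compactness and nonemptiness of the star boundary
    have hSfin : {s : Finset (EuclideanSpace ℝ (Fin d)) | s ∈ T ∧ x0 ∈ s}.Finite :=
      T.finite_toSet.subset fun s hs => hs.1
    have hScomp : IsCompact (starBdry d T x0) := by
      rw [starBdry]
      exact hSfin.isCompact_biUnion fun s _ =>
        ((s.finite_toSet.subset Set.diff_subset)).isCompact_convexHull (𝕜 := ℝ)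
    obtain ⟨s₁, hs₁T, hx0s₁, y₁, hy₁, hy₁ne⟩ := hstar x0 hx0intr
    have hSne : (starBdry d T x0).Nonempty := by
      refine ⟨y₁, Set.mem_iUnion₂.mpr ⟨s₁, ⟨hs₁T, hx0s₁⟩, subset_convexHull ℝ _ ?_⟩⟩
      exact ⟨hy₁, hy₁ne⟩
    have hcontv : ContinuousOn (fun y => v y + ρ x0 (x0 - y)) (starBdry d T x0) :=
      ((hv.1).add ((hρc x0).comp (continuous_const.sub continuous_id))).continuousOn
    have hcontu : ContinuousOn (fun y => u y + ρ x0 (x0 - y)) (starBdry d T x0) :=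
      ((hu.1).add ((hρc x0).comp (continuous_const.sub continuous_id))).continuousOn
    obtain ⟨ystar, hymem, hsInfeq, hminv⟩ := hScomp.exists_sInf_image_eq_and_le hSne hcontv
    have hLv : hopfLax d T intr ρ v x0 = v ystar + ρ x0 (x0 - ystar) := by
      simp only [hopfLax, if_pos hx0intr]
      exact hsInfeq
    have hsupx : v ystar + ρ x0 (x0 - ystar) ≤ v x0 := hLv ▸ hsup x0 hx0nodes
    have hbddu : BddBelow ((fun y => u y + ρ x0 (x0 - y)) '' starBdry d T x0) := by
      obtain ⟨yu, hyu, _, hminu⟩ := hScomp.exists_sInf_image_eq_and_le hSne hcontu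
      exact ⟨u yu + ρ x0 (x0 - yu), fun r hr => by
        obtain ⟨y, hy, rfl⟩ := hr; exact hminu y hy⟩
    have hsubx : u x0 ≤ u ystar + ρ x0 (x0 - ystar) := by
      refine le_trans ?_ (csInf_le hbddu ⟨ystar, hymem, rfl⟩)
      have h := hsub x0 hx0nodes
      simp only [hopfLax, if_pos hx0intr] at h
      exact h
    -- decompose ystar as a convex combination of the vertices of the opposite face
    obtain ⟨s, hsT', hyhull⟩ := Set.mem_iUnion₂.mp hymem
    obtain ⟨hsT, hx0s⟩ := hsT'
    rw [← Finset.coe_erase] at hyhull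
    set t := s.erase x0 with htdef
    obtain ⟨w, hw0, hw1, hwsum⟩ := Finset.mem_convexHull'.mp hyhull
    obtain ⟨f, hf⟩ := hu.2 s hsT
    obtain ⟨g, hg⟩ := hv.2 s hsT
    have htsub : (t : Set (EuclideanSpace ℝ (Fin d))) ⊆ (s : Set (EuclideanSpace ℝ (Fin d))) :=
      Finset.coe_subset.mpr (Finset.erase_subset _ _)
    have hy_s : ystar ∈ convexHull ℝ (s : Set (EuclideanSpace ℝ (Fin d))) :=
      convexHull_mono htsub hyhull
    have hz_s : ∀ z ∈ t, z ∈ convexHull ℝ (s : Set (EuclideanSpace ℝ (Fin d))) := fun z hz =>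
      subset_convexHull ℝ _ (htsub hz)
    have hz_nodes : ∀ z ∈ t, z ∈ nodes := fun z hz =>
      hnodes s hsT z (Finset.erase_subset _ _ hz)
    have hz_ne : ∀ z ∈ t, z ≠ x0 := fun z hz => Finset.ne_of_mem_erase hz
    have hu_y : u ystar = ∑ z ∈ t, w z * u z := by
      rw [hf ystar hy_s, ← hwsum, affine_sum_eval f t w hw1]
      exact Finset.sum_congr rfl fun z hz => by rw [← hf z (hz_s z hz)]
    have hv_y : v ystar = ∑ z ∈ t, w z * v z := by
      rw [hg ystar hy_s, ← hwsum, affine_sum_eval g t w hw1]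
      exact Finset.sum_congr rfl fun z hz => by rw [← hg z (hz_s z hz)]
    have hx0Meq : u x0 - v x0 = M := hx0M
    have hchain : M ≤ ∑ z ∈ t, w z * (u z - v z) := by
      have h1 : M ≤ u ystar - v ystar := by linarith
      calc M ≤ u ystar - v ystar := h1
        _ = ∑ z ∈ t, w z * (u z - v z) := by
            rw [hu_y, hv_y, ← Finset.sum_sub_distrib]
            exact Finset.sum_congr rfl fun z _ => by ring
    have hMeq : ∀ z ∈ t, 0 < w z → u z - v z = M :=
      sum_eq_on_support hw0 hw1 (fun z hz _ => hbmax z (hz_nodes z hz)) hchain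
    have hzS : ∀ z ∈ t, 0 < w z → z ∈ S := fun z hz hp =>
      Finset.mem_filter.mpr ⟨hz_nodes z hz, hMeq z hz hp⟩
    have hvz : ∀ z ∈ t, 0 < w z → m ≤ v z := fun z hz hp => hcmin z (hzS z hz hp)
    have hvy : m ≤ v ystar := by
      rw [hv_y]
      calc m = ∑ z ∈ t, w z * m := by rw [← Finset.sum_mul, hw1, one_mul]
        _ ≤ ∑ z ∈ t, w z * v z := by
            refine Finset.sum_le_sum fun z hz => ?_
            rcases (hw0 z hz).eq_or_lt with h | h
            · rw [← h]; simp
            · exact mul_le_mul_of_nonneg_left (hvz z hz h) h.le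
    have hvx0 : v x0 = m := hx0m
    by_cases hyx : ystar = x0
    · -- degenerate case: the minimizer is the node itself
      have hveq : (∑ z ∈ t, w z * v z) = m := by rw [← hv_y, hyx, hvx0]
      have hsumneg : -m ≤ ∑ z ∈ t, w z * -v z := by
        have : (∑ z ∈ t, w z * -v z) = -(∑ z ∈ t, w z * v z) := by
          rw [← Finset.sum_neg_distrib]
          exact Finset.sum_congr rfl fun z _ => by ring
        rw [this, hveq]
      have hvz_eq : ∀ z ∈ t, 0 < w z → v z = m := by
        have h := sum_eq_on_support (a := fun z => -v z) (M := -m) hw0 hw1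
          (fun z hz hp => neg_le_neg (hvz z hz hp)) hsumneg
        intro z hz hp
        have h2 : -v z = -m := h z hz hp
        linarith
      have hzS' : ∀ z ∈ t, 0 < w z → ‖z‖ ≤ ‖x0‖ := fun z hz hp =>
        hx0max z (Finset.mem_filter.mpr ⟨hzS z hz hp, hvz_eq z hz hp⟩)
      exact variance_pos t w x0 hw0 hw1 (by rw [hwsum, hyx]) hz_ne hzS'
    · have hρp : 0 < ρ x0 (x0 - ystar) :=
        hρpos x0 hx0intr _ (sub_ne_zero.mpr fun h => hyx h.symm)
      linarith
  -- reduce the statement on the whole domain to the nodes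
  intro x hx
  obtain ⟨s, hsT, hxhull⟩ := Set.mem_iUnion₂.mp hx
  have hsT' : s ∈ T := hsT
  obtain ⟨w, hw0, hw1, hwsum⟩ := Finset.mem_convexHull'.mp hxhull
  obtain ⟨f, hf⟩ := hu.2 s hsT'
  obtain ⟨g, hg⟩ := hv.2 s hsT'
  have hz_s : ∀ z ∈ s, z ∈ convexHull ℝ (s : Set (EuclideanSpace ℝ (Fin d))) := fun z hz =>
    subset_convexHull ℝ _ hz
  have hux : u x = ∑ z ∈ s, w z * u z := by
    rw [hf x hxhull, ← hwsum, affine_sum_eval f s w hw1]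
    exact Finset.sum_congr rfl fun z hz => by rw [← hf z (hz_s z hz)]
  have hvx : v x = ∑ z ∈ s, w z * v z := by
    rw [hg x hxhull, ← hwsum, affine_sum_eval g s w hw1]
    exact Finset.sum_congr rfl fun z hz => by rw [← hg z (hz_s z hz)]
  rw [hux, hvx]
  refine Finset.sum_le_sum fun z hz => ?_
  rcases (hw0 z hz).eq_or_lt with h | h
  · rw [← h]; simp
  · exact mul_le_mul_of_nonneg_left (key z (hnodes s hsT' z hz)) h.le
end

section
/- Uniqueness of the discrete solution: under ρ(x_h, q) > 0 for all interior nodes x_h and q ≠ 0, there is at most one u_h ∈ V_h with u_h = Λ_h u_h and u_h = g on the boundary nodes. -/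
open scoped RealInnerProductSpace
open Classical

lemma starBdry_isCompact (d : ℕ) (T : Finset (Finset (EuclideanSpace ℝ (Fin d))))
    (x : EuclideanSpace ℝ (Fin d)) : IsCompact (starBdry d T x) := by
  apply Set.Finite.isCompact_biUnion
  · exact T.finite_toSet.subset (fun s hs => hs.1)
  · intro s _
    exact (s.finite_toSet.subset Set.diff_subset).isCompact_convexHull (𝕜 := ℝ)

lemma pl_expand {d : ℕ} {T : Finset (Finset (EuclideanSpace ℝ (Fin d)))}
    {u : EuclideanSpace ℝ (Fin d) → ℝ} (hu : IsPL d T u)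
    {s t : Finset (EuclideanSpace ℝ (Fin d))} (hs : s ∈ T) (hts : t ⊆ s)
    {w : EuclideanSpace ℝ (Fin d) → ℝ} (hw0 : ∀ z ∈ t, 0 ≤ w z)
    (hw1 : ∑ z ∈ t, w z = 1) :
    u (t.centerMass w id) = ∑ z ∈ t, w z * u z := by
  obtain ⟨f, hf⟩ := hu.2 s hs
  have hmem : t.centerMass w id ∈ convexHull ℝ ((s : Set (EuclideanSpace ℝ (Fin d)))) :=
    t.centerMass_mem_convexHull hw0 (by rw [hw1]; exact one_pos) (fun z hz => hts hz)
  rw [hf _ hmem, Finset.centerMass_eq_of_sum_1 _ _ hw1]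
  have hd := f.decomp
  have hfz : ∀ z, f z = f.linear z + f 0 := fun z => by conv_lhs => rw [hd]; simp
  rw [hfz]
  simp only [id_eq]
  rw [map_sum]
  simp only [map_smul, smul_eq_mul]
  have hrw : ∀ z ∈ t, w z * u z = w z * f.linear z + w z * f 0 := by
    intro z hz
    rw [hf z (subset_convexHull ℝ _ (hts hz)), hfz z]; ring
  rw [Finset.sum_congr rfl hrw, Finset.sum_add_distrib, ← Finset.sum_mul, hw1, one_mul]

lemma sInf_image_eq {d : ℕ} {K : Set (EuclideanSpace ℝ (Fin d))}
    {g : EuclideanSpace ℝ (Fin d) → ℝ}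
    {y : EuclideanSpace ℝ (Fin d)} (hyK : y ∈ K) (hmin : ∀ z ∈ K, g y ≤ g z) :
    sInf (g '' K) = g y := by
  apply le_antisymm
  · exact csInf_le ⟨g y, by rintro a ⟨z, hz, rfl⟩; exact hmin z hz⟩ ⟨y, hyK, rfl⟩
  · exact le_csInf ⟨g y, y, hyK, rfl⟩ (by rintro a ⟨z, hz, rfl⟩; exact hmin z hz)

lemma key_comparison (d : ℕ)
    (T : Finset (Finset (EuclideanSpace ℝ (Fin d))))
    (nodes intr : Finset (EuclideanSpace ℝ (Fin d))) (hintr : intr ⊆ nodes)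
    (hnodes : ∀ s ∈ T, ∀ x ∈ s, x ∈ nodes)
    (hstar : ∀ x ∈ intr, ∃ s ∈ T, x ∈ s ∧ ∃ y ∈ s, y ≠ x)
    (ρ : EuclideanSpace ℝ (Fin d) → EuclideanSpace ℝ (Fin d) → ℝ)
    (hρc : ∀ x, Continuous (ρ x))
    (hρpos : ∀ x ∈ intr, ∀ q : EuclideanSpace ℝ (Fin d), q ≠ 0 → 0 < ρ x q)
    (u v : EuclideanSpace ℝ (Fin d) → ℝ) (hu : IsPL d T u) (hv : IsPL d T v)
    (hufix : ∀ x ∈ nodes, u x = hopfLax d T intr ρ u x)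
    (hvfix : ∀ x ∈ nodes, v x = hopfLax d T intr ρ v x)
    (hbc : ∀ x ∈ nodes, x ∉ intr → u x = v x) :
    ∀ x ∈ nodes, u x ≤ v x := by
  by_contra hcon
  push_neg at hcon
  obtain ⟨x₀, hx₀, hlt⟩ := hcon
  classical
  obtain ⟨xm, hxm, hmax⟩ := nodes.exists_max_image (fun z => u z - v z) ⟨x₀, hx₀⟩
  set M := u xm - v xm with hM
  have hMpos : 0 < M := lt_of_lt_of_le (sub_pos.mpr hlt) (hmax x₀ hx₀)
  set A := nodes.filter (fun z => u z - v z = M) with hA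
  have hAne : A.Nonempty := ⟨xm, Finset.mem_filter.mpr ⟨hxm, rfl⟩⟩
  have hAintr : ∀ z ∈ A, z ∈ intr := by
    intro z hz
    rw [Finset.mem_filter] at hz
    by_contra hzi
    have := hbc z hz.1 hzi
    rw [hz.2.symm.trans (by rw [this]; ring : u z - v z = 0)] at hMpos
    exact lt_irrefl 0 hMpos
  obtain ⟨x₁, hx₁, hminv⟩ := A.exists_min_image v hAne
  set m := v x₁ with hm
  set B := A.filter (fun z => v z = m) with hB
  have hBne : B.Nonempty := ⟨x₁, Finset.mem_filter.mpr ⟨hx₁, rfl⟩⟩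
  obtain ⟨x, hxB, hxmax⟩ := B.exists_max_image (fun z => ‖z‖ ^ 2) hBne
  rw [Finset.mem_filter] at hxB
  have hxA : x ∈ A := hxB.1
  have hxv : v x = m := hxB.2
  have hxφ : u x - v x = M := (Finset.mem_filter.mp hxA).2
  have hxintr : x ∈ intr := hAintr x hxA
  have hxnodes : x ∈ nodes := hintr hxintr
  set K := starBdry d T x with hK
  have hKc : IsCompact K := starBdry_isCompact d T x
  have hKne : K.Nonempty := by
    obtain ⟨s, hsT, hxs, y, hys, hyx⟩ := hstar x hxintr
    exact ⟨y, Set.mem_biUnion (show s ∈ {s | s ∈ T ∧ x ∈ s} from ⟨hsT, hxs⟩)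
      (subset_convexHull ℝ _ ⟨hys, by simpa using hyx⟩)⟩
  have hgv : ContinuousOn (fun y => v y + ρ x (x - y)) K :=
    (hv.1.add ((hρc x).comp (continuous_const.sub continuous_id))).continuousOn
  have hgu : ContinuousOn (fun y => u y + ρ x (x - y)) K :=
    (hu.1.add ((hρc x).comp (continuous_const.sub continuous_id))).continuousOn
  obtain ⟨ystar, hyK, hvmin⟩ := hKc.exists_isMinOn hKne hgv
  have hvmin' : ∀ z ∈ K, v ystar + ρ x (x - ystar) ≤ v z + ρ x (x - z) := fun z hz => hvmin hz
  have hvx : v x = v ystar + ρ x (x - ystar) := by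
    have h1 := hvfix x hxnodes
    rw [hopfLax, if_pos hxintr] at h1
    rw [h1]
    exact sInf_image_eq hyK hvmin'
  have hux : u x ≤ u ystar + ρ x (x - ystar) := by
    have h1 := hufix x hxnodes
    rw [hopfLax, if_pos hxintr] at h1
    rw [h1]
    obtain ⟨yu, hyu, humin⟩ := hKc.exists_isMinOn hKne hgu
    exact csInf_le ⟨u yu + ρ x (x - yu), by rintro a ⟨z, hz, rfl⟩; exact humin hz⟩
      ⟨ystar, hyK, rfl⟩
  have hMy : M ≤ u ystar - v ystar := by rw [← hxφ]; linarith
  -- decompose ystar as a convex combination in some opposite face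
  obtain ⟨s, hsP, hyhull⟩ := Set.mem_iUnion₂.mp hyK
  obtain ⟨hsT, hxs⟩ := hsP
  set t := s.erase x with ht
  have hcoe : ((s : Set (EuclideanSpace ℝ (Fin d))) \ {x}) = (t : Set (EuclideanSpace ℝ (Fin d))) :=
    (Finset.coe_erase x s).symm
  rw [hcoe, Finset.convexHull_eq] at hyhull
  obtain ⟨w, hw0, hw1, hcm⟩ := hyhull
  have hts : t ⊆ s := Finset.erase_subset _ _
  have huy : u ystar = ∑ z ∈ t, w z * u z := by rw [← hcm]; exact pl_expand hu hsT hts hw0 hw1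
  have hvy : v ystar = ∑ z ∈ t, w z * v z := by rw [← hcm]; exact pl_expand hv hsT hts hw0 hw1
  have htnodes : ∀ z ∈ t, z ∈ nodes := fun z hz => hnodes s hsT z (hts hz)
  have hφle : ∀ z ∈ t, u z - v z ≤ M := fun z hz => hmax z (htnodes z hz)
  -- positive-weight vertices lie in A
  have hsub : ∑ z ∈ t, w z * (M - (u z - v z)) = 0 := by
    have hexp : ∑ z ∈ t, w z * (M - (u z - v z))
        = (∑ z ∈ t, w z) * M - (∑ z ∈ t, w z * u z - ∑ z ∈ t, w z * v z) := by
      rw [Finset.sum_mul, ← Finset.sum_sub_distrib, ← Finset.sum_sub_distrib]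
      exact Finset.sum_congr rfl fun z _ => by ring
    have hle : ∑ z ∈ t, w z * (M - (u z - v z)) ≤ 0 := by
      rw [hexp, hw1, one_mul, ← huy, ← hvy]; linarith
    have hge : 0 ≤ ∑ z ∈ t, w z * (M - (u z - v z)) :=
      Finset.sum_nonneg fun z hz => mul_nonneg (hw0 z hz) (by linarith [hφle z hz])
    linarith
  have hterm0 : ∀ z ∈ t, w z * (M - (u z - v z)) = 0 := by
    intro z hz
    exact (Finset.sum_eq_zero_iff_of_nonneg
      (fun z hz => mul_nonneg (hw0 z hz) (by linarith [hφle z hz]))).mp hsub z hz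
  have hzA : ∀ z ∈ t, 0 < w z → z ∈ A := by
    intro z hz hwz
    have := hterm0 z hz
    have hφz : u z - v z = M := by
      rcases mul_eq_zero.mp this with h | h
      · exact absurd h (ne_of_gt hwz)
      · linarith
    exact Finset.mem_filter.mpr ⟨htnodes z hz, hφz⟩
  have hvy_ge : m ≤ v ystar := by
    rw [hvy]
    calc m = ∑ z ∈ t, w z * m := by rw [← Finset.sum_mul, hw1, one_mul]
    _ ≤ ∑ z ∈ t, w z * v z := by
        apply Finset.sum_le_sum
        intro z hz
        rcases eq_or_lt_of_le (hw0 z hz) with h | h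
        · rw [← h]; simp
        · exact mul_le_mul_of_nonneg_left (hminv z (hzA z hz h)) h.le
  by_cases hxy : ystar = x
  · -- degenerate case: x is itself in the opposite face
    have hvyx : v ystar = m := by rw [hxy, hxv]
    have hsub2 : ∑ z ∈ t, w z * (v z - m) = 0 := by
      have : ∑ z ∈ t, w z * (v z - m)
          = ∑ z ∈ t, w z * v z - (∑ z ∈ t, w z) * m := by
        rw [Finset.sum_mul, ← Finset.sum_sub_distrib]
        exact Finset.sum_congr rfl fun z _ => by ring
      rw [this, ← hvy, hvyx, hw1, one_mul, sub_self]
    have hterm2 : ∀ z ∈ t, w z * (v z - m) = 0 := by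
      apply (Finset.sum_eq_zero_iff_of_nonneg ?_).mp hsub2
      intro z hz
      rcases eq_or_lt_of_le (hw0 z hz) with h | h
      · rw [← h]; simp
      · exact mul_nonneg h.le (by linarith [hminv z (hzA z hz h)])
    have hzB : ∀ z ∈ t, 0 < w z → z ∈ B := by
      intro z hz hwz
      refine Finset.mem_filter.mpr ⟨hzA z hz hwz, ?_⟩
      rcases mul_eq_zero.mp (hterm2 z hz) with h | h
      · exact absurd h (ne_of_gt hwz)
      · linarith
    have hxsum : x = ∑ z ∈ t, w z • z := by
      rw [← hxy, ← hcm, Finset.centerMass_eq_of_sum_1 _ _ hw1]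
      simp
    have hinner : (∑ z ∈ t, w z * ⟪z, x⟫) = ‖x‖ ^ 2 := by
      have h1 : (∑ z ∈ t, w z * ⟪z, x⟫) = ⟪∑ z ∈ t, w z • z, x⟫ := by
        rw [sum_inner]
        exact Finset.sum_congr rfl fun z _ => (real_inner_smul_left z x (w z)).symm
      rw [h1, ← hxsum, real_inner_self_eq_norm_sq]
    have hsum2 : ∑ z ∈ t, w z * ‖z - x‖ ^ 2 = (∑ z ∈ t, w z * ‖z‖ ^ 2) - ‖x‖ ^ 2 := by
      have h2 : ∑ z ∈ t, w z * ‖z - x‖ ^ 2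
          = ∑ z ∈ t, w z * ‖z‖ ^ 2 - 2 * ∑ z ∈ t, w z * ⟪z, x⟫
            + ∑ z ∈ t, w z * ‖x‖ ^ 2 := by
        rw [Finset.mul_sum, ← Finset.sum_sub_distrib, ← Finset.sum_add_distrib]
        refine Finset.sum_congr rfl fun z _ => ?_
        rw [norm_sub_sq_real]; ring
      rw [h2, hinner, ← Finset.sum_mul, hw1, one_mul]; ring
    have hle0 : ∑ z ∈ t, w z * ‖z - x‖ ^ 2 ≤ 0 := by
      rw [hsum2]
      have hle : ∑ z ∈ t, w z * ‖z‖ ^ 2 ≤ ∑ z ∈ t, w z * ‖x‖ ^ 2 := by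
        apply Finset.sum_le_sum
        intro z hz
        rcases eq_or_lt_of_le (hw0 z hz) with h | h
        · rw [← h]; simp
        · exact mul_le_mul_of_nonneg_left (hxmax z (hzB z hz h)) h.le
      have : ∑ z ∈ t, w z * ‖x‖ ^ 2 = ‖x‖ ^ 2 := by rw [← Finset.sum_mul, hw1, one_mul]
      linarith
    have hpos : 0 < ∑ z ∈ t, w z * ‖z - x‖ ^ 2 := by
      have hne : ∃ z ∈ t, 0 < w z := by
        by_contra hc
        push_neg at hc
        have : ∑ z ∈ t, w z = 0 :=
          Finset.sum_eq_zero fun z hz => le_antisymm (hc z hz) (hw0 z hz)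
        rw [hw1] at this; norm_num at this
      obtain ⟨z0, hz0t, hz0w⟩ := hne
      apply Finset.sum_pos' (fun z hz => mul_nonneg (hw0 z hz) (by positivity))
      refine ⟨z0, hz0t, mul_pos hz0w ?_⟩
      have hz0x : z0 - x ≠ 0 := sub_ne_zero.mpr (Finset.ne_of_mem_erase hz0t)
      exact pow_pos (norm_pos_iff.mpr hz0x) 2
    linarith
  · -- nondegenerate case: ρ gives strict decrease of v
    have hρ : 0 < ρ x (x - ystar) := hρpos x hxintr _ (sub_ne_zero.mpr (Ne.symm hxy))
    have : v ystar < m := by rw [← hxv]; linarith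
    linarith

/-- Uniqueness of the discrete finite-element solution. -/
theorem stmt13 (d : ℕ)
    (T : Finset (Finset (EuclideanSpace ℝ (Fin d))))
    (nodes intr : Finset (EuclideanSpace ℝ (Fin d))) (hintr : intr ⊆ nodes)
    (hnodes : ∀ s ∈ T, ∀ x ∈ s, x ∈ nodes)
    (hstar : ∀ x ∈ intr, ∃ s ∈ T, x ∈ s ∧ ∃ y ∈ s, y ≠ x)
    (ρ : EuclideanSpace ℝ (Fin d) → EuclideanSpace ℝ (Fin d) → ℝ)
    (hρc : ∀ x, Continuous (ρ x))
    (hρpos : ∀ x ∈ intr, ∀ q : EuclideanSpace ℝ (Fin d), q ≠ 0 → 0 < ρ x q)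
    (g : EuclideanSpace ℝ (Fin d) → ℝ)
    (u v : EuclideanSpace ℝ (Fin d) → ℝ) (hu : IsPL d T u) (hv : IsPL d T v)
    (hufix : ∀ x ∈ nodes, u x = hopfLax d T intr ρ u x)
    (hvfix : ∀ x ∈ nodes, v x = hopfLax d T intr ρ v x)
    (hubc : ∀ x ∈ nodes, x ∉ intr → u x = g x)
    (hvbc : ∀ x ∈ nodes, x ∉ intr → v x = g x) :
    ∀ x ∈ ⋃ s ∈ (T : Set (Finset (EuclideanSpace ℝ (Fin d)))),
      convexHull ℝ (s : Set (EuclideanSpace ℝ (Fin d))), u x = v x := by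
  have hbc : ∀ x ∈ nodes, x ∉ intr → u x = v x :=
    fun x hx hxi => (hubc x hx hxi).trans (hvbc x hx hxi).symm
  have h1 := key_comparison d T nodes intr hintr hnodes hstar ρ hρc hρpos u v hu hv
    hufix hvfix hbc
  have h2 := key_comparison d T nodes intr hintr hnodes hstar ρ hρc hρpos v u hv hu
    hvfix hufix (fun x hx hxi => (hbc x hx hxi).symm)
  have hnode : ∀ x ∈ nodes, u x = v x := fun x hx => le_antisymm (h1 x hx) (h2 x hx)
  intro p hp
  obtain ⟨s, hsT, hps⟩ := Set.mem_iUnion₂.mp hp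
  rw [Finset.convexHull_eq] at hps
  obtain ⟨w, hw0, hw1, hcm⟩ := hps
  rw [← hcm, pl_expand hu hsT le_rfl hw0 hw1, pl_expand hv hsT le_rfl hw0 hw1]
  exact Finset.sum_congr rfl fun z hz => by rw [hnode z (hnodes s hsT z hz)]
end

section
/- Let u_h ∈ V_h be the discrete solution (u_h = Λ_h u_h, u_h|_{∂Ω_h} = g), assume ρ_*‖q‖ ≤ ρ(x,q) ≤ ρ^*‖q‖ with ρ_* > 0, and assume the discrete compatibility g(x) − g(y) ≤ (ρ_*/θ)‖x − y‖ for boundary points, where θ is the shape-regularity constant. Then for any two neighboring nodes x_h, y_h (joined by an edge of the triangulation) one has |u_h(x_h) − u_h(y_h)| ≤ ρ^* ‖x_h − y_h‖. -/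
open scoped RealInnerProductSpace
open Classical

/-- Step 1 of the uniform Lipschitz bound: the discrete solution satisfies
`|u x - u y| ≤ ρ^* ‖x - y‖` for neighboring nodes `x`, `y`. -/
theorem stmt14 (d : ℕ)
    (T : Finset (Finset (EuclideanSpace ℝ (Fin d))))
    (nodes intr : Finset (EuclideanSpace ℝ (Fin d))) (hintr : intr ⊆ nodes)
    (hnodes : ∀ s ∈ T, ∀ x ∈ s, x ∈ nodes)
    (hstar : ∀ x ∈ intr, ∃ s ∈ T, x ∈ s ∧ ∃ y ∈ s, y ≠ x)
    (ρ : EuclideanSpace ℝ (Fin d) → EuclideanSpace ℝ (Fin d) → ℝ)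
    (hρc : ∀ x, Continuous (ρ x))
    (ρlow ρup θ : ℝ) (hρlow : 0 < ρlow) (hθ : 1 ≤ θ)
    (hbounds : ∀ x q, ρlow * ‖q‖ ≤ ρ x q ∧ ρ x q ≤ ρup * ‖q‖)
    (hshape : ∀ s ∈ T, ∀ x ∈ s, ∀ y ∈ convexHull ℝ ((s : Set (EuclideanSpace ℝ (Fin d))) \ {x}),
      ∀ z ∈ s, ‖x - z‖ ≤ θ * ‖x - y‖)
    (g : EuclideanSpace ℝ (Fin d) → ℝ)
    (hg : ∀ x ∈ nodes, ∀ y ∈ nodes, x ∉ intr → y ∉ intr →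
      g x - g y ≤ (ρlow / θ) * ‖x - y‖)
    (u : EuclideanSpace ℝ (Fin d) → ℝ) (hu : IsPL d T u)
    (hufix : ∀ x ∈ nodes, u x = hopfLax d T intr ρ u x)
    (hubc : ∀ x ∈ nodes, x ∉ intr → u x = g x) :
    ∀ x ∈ nodes, ∀ y ∈ nodes, (∃ s ∈ T, x ∈ s ∧ y ∈ s) →
      |u x - u y| ≤ ρup * ‖x - y‖ :=
  by
  classical
  obtain ⟨hucont, huaff⟩ := hu
  set c := ρlow / θ with hc
  have hθ0 : (0:ℝ) < θ := lt_of_lt_of_le one_pos hθ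
  have hc0 : 0 < c := div_pos hρlow hθ0
  -- compactness of star boundaries
  have hcomp : ∀ x, IsCompact (starBdry d T x) := by
    intro x
    apply Set.Finite.isCompact_biUnion
    · exact T.finite_toSet.subset (fun s hs => hs.1)
    · intro s _
      exact (s.finite_toSet.diff (t := {x})).isCompact_convexHull (𝕜 := ℝ)
  have hcontF : ∀ x, Continuous (fun z => u z + ρ x (x - z)) := fun x =>
    hucont.add ((hρc x).comp (continuous_const.sub continuous_id))
  have hBdd : ∀ x, BddBelow ((fun z => u z + ρ x (x - z)) '' starBdry d T x) := fun x =>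
    ((hcomp x).image (hcontF x)).bddBelow
  have hmemSB : ∀ x, ∀ s ∈ T, x ∈ s → ∀ z ∈ s, z ≠ x → z ∈ starBdry d T x := by
    intro x s hsT hxs z hzs hzx
    exact Set.mem_biUnion (⟨hsT, hxs⟩ : s ∈ {s : Finset (EuclideanSpace ℝ (Fin d)) | s ∈ T ∧ x ∈ s})
      (subset_convexHull ℝ _ ⟨hzs, hzx⟩)
  -- upper bound at interior nodes
  have hB : ∀ x ∈ intr, ∀ z ∈ starBdry d T x, u x ≤ u z + ρ x (x - z) := by
    intro x hx z hz
    rw [hufix x (hintr hx)]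
    simp only [hopfLax, if_pos hx]
    exact csInf_le (hBdd x) ⟨z, hz, rfl⟩
  -- lower bound at interior nodes: descent to a strictly smaller neighbor
  have hC : ∀ y ∈ intr, ∃ v ∈ nodes, v ≠ y ∧ u v + c * ‖y - v‖ ≤ u y := by
    intro y hy
    obtain ⟨s₀, hs₀T, hys₀, w, hws₀, hwy⟩ := hstar y hy
    have hne : (starBdry d T y).Nonempty := ⟨w, hmemSB y s₀ hs₀T hys₀ w hws₀ hwy⟩
    have hmem : sInf ((fun z => u z + ρ y (y - z)) '' starBdry d T y) ∈
        ((fun z => u z + ρ y (y - z)) '' starBdry d T y) :=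
      ((hcomp y).image (hcontF y)).sInf_mem (hne.image _)
    obtain ⟨z, hzS, hz⟩ := hmem
    have huy : u y = u z + ρ y (y - z) := by
      rw [hufix y (hintr hy)]
      simp only [hopfLax, if_pos hy]
      exact hz.symm
    obtain ⟨s', hs'mem, hzc⟩ := Set.mem_iUnion₂.1 hzS
    obtain ⟨hs'T, hys'⟩ := hs'mem
    obtain ⟨f, hf⟩ := huaff s' hs'T
    have hconc : ConcaveOn ℝ (Set.univ : Set (EuclideanSpace ℝ (Fin d))) f := by
      have := (concaveOn_id (convex_univ (𝕜 := ℝ) (E := ℝ))).comp_affineMap f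
      simpa [Function.comp] using this
    obtain ⟨v, hv, hfv⟩ := hconc.exists_le_of_mem_convexHull (Set.subset_univ _) hzc
    have hvs' : v ∈ s' := hv.1
    have hvy : v ≠ y := hv.2
    have huv : u v ≤ u z := by
      have h1 : u v = f v := hf v (subset_convexHull ℝ _ hvs')
      have h2 : u z = f z := hf z (convexHull_mono Set.diff_subset hzc)
      rw [h1, h2]; exact hfv
    have hsh : ‖y - v‖ ≤ θ * ‖y - z‖ := hshape s' hs'T y hys' z hzc v hvs'
    have hρb := (hbounds y (y - z)).1
    refine ⟨v, hnodes s' hs'T v hvs', hvy, ?_⟩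
    have h3 : c * ‖y - v‖ ≤ ρlow * ‖y - z‖ := by
      have := mul_le_mul_of_nonneg_left hsh hc0.le
      rw [hc] at this ⊢
      calc ρlow / θ * ‖y - v‖ ≤ ρlow / θ * (θ * ‖y - z‖) := this
        _ = ρlow * ‖y - z‖ := by field_simp
    linarith
  -- descent to the boundary
  have hD : ∀ n : ℕ, ∀ y ∈ nodes, ((nodes.filter (fun w => u w < u y)).card ≤ n) →
      ∃ b ∈ nodes, b ∉ intr ∧ u b + c * ‖y - b‖ ≤ u y := by
    intro n
    induction n with
    | zero =>
      intro y hy hcard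
      by_cases hyi : y ∈ intr
      · obtain ⟨v, hvn, hvy, hineq⟩ := hC y hyi
        have hpos : 0 < c * ‖y - v‖ :=
          mul_pos hc0 (norm_sub_pos_iff.2 (Ne.symm hvy))
        have huv : u v < u y := by linarith
        have hvmem : v ∈ nodes.filter (fun w => u w < u y) :=
          Finset.mem_filter.2 ⟨hvn, huv⟩
        have := Finset.card_pos.2 ⟨v, hvmem⟩
        omega
      · exact ⟨y, hy, hyi, by simp⟩
    | succ n ih =>
      intro y hy hcard
      by_cases hyi : y ∈ intr
      · obtain ⟨v, hvn, hvy, hineq⟩ := hC y hyi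
        have hpos : 0 < c * ‖y - v‖ :=
          mul_pos hc0 (norm_sub_pos_iff.2 (Ne.symm hvy))
        have huv : u v < u y := by linarith
        have hvmem : v ∈ nodes.filter (fun w => u w < u y) :=
          Finset.mem_filter.2 ⟨hvn, huv⟩
        have hsub : nodes.filter (fun w => u w < u v) ⊆
            (nodes.filter (fun w => u w < u y)).erase v := by
          intro w hw
          obtain ⟨hwn, hwv⟩ := Finset.mem_filter.1 hw
          refine Finset.mem_erase.2 ⟨?_, Finset.mem_filter.2 ⟨hwn, lt_trans hwv huv⟩⟩
          rintro rfl; exact absurd hwv (lt_irrefl _)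
        have hcard' : (nodes.filter (fun w => u w < u v)).card ≤ n := by
          have h1 := Finset.card_le_card hsub
          have h2 := Finset.card_erase_of_mem hvmem
          omega
        obtain ⟨b, hbn, hbi, hineq2⟩ := ih v hvn hcard'
        refine ⟨b, hbn, hbi, ?_⟩
        have tri : ‖y - b‖ ≤ ‖y - v‖ + ‖v - b‖ := by
          have := dist_triangle y v b
          simpa [dist_eq_norm] using this
        have := mul_le_mul_of_nonneg_left tri hc0.le
        linarith
      · exact ⟨y, hy, hyi, by simp⟩
  -- one-sided estimate
  have key : ∀ x ∈ nodes, ∀ y ∈ nodes, (∃ s ∈ T, x ∈ s ∧ y ∈ s) →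
      u x - u y ≤ ρup * ‖x - y‖ := by
    rintro x hx y hy ⟨s, hsT, hxs, hys⟩
    by_cases hxy : x = y
    · subst hxy; simp
    have hnorm : 0 < ‖x - y‖ := norm_sub_pos_iff.2 hxy
    have hlu : ρlow ≤ ρup := by
      have h1 := (hbounds x (x - y)).1
      have h2 := (hbounds x (x - y)).2
      nlinarith
    by_cases hxi : x ∈ intr
    · have hyB : y ∈ starBdry d T x :=
        hmemSB x s hsT hxs y hys (fun h => hxy h.symm)
      have h1 := hB x hxi y hyB
      have h2 := (hbounds x (x - y)).2
      linarith
    · obtain ⟨b, hbn, hbi, hineq⟩ := hD _ y hy le_rfl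
      have hux : u x = g x := hubc x hx hxi
      have hub : u b = g b := hubc b hbn hbi
      have hgg := hg x hx b hbn hxi hbi
      have tri : ‖x - b‖ ≤ ‖x - y‖ + ‖y - b‖ := by
        have := dist_triangle x y b
        simpa [dist_eq_norm] using this
      have htri := mul_le_mul_of_nonneg_left tri hc0.le
      have hcρ : c ≤ ρup := le_trans (div_le_self hρlow.le hθ) hlu
      have hfin := mul_le_mul_of_nonneg_right hcρ (norm_nonneg (x - y))
      linarith
  intro x hx y hy hn
  have h1 := key x hx y hy hn
  have h2 : u y - u x ≤ ρup * ‖x - y‖ := by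
    obtain ⟨s, hsT, hxs, hys⟩ := hn
    have := key y hy x hx ⟨s, hsT, hys, hxs⟩
    rwa [norm_sub_rev y x] at this
  rw [abs_sub_le_iff]
  exact ⟨h1, h2⟩
end

section
/- Let v ∈ V_h be affine on a simplex σ of a shape-regular triangulation (h_1(σ)/h_0(σ) ≤ θ) and suppose |v(x_h) − v(y_h)| ≤ ρ^* ‖x_h − y_h‖ for every pair of vertices x_h, y_h of σ. Then the (constant) gradient satisfies ‖Dv|_σ‖ ≤ θ d ρ^*, hence |v(x) − v(y)| ≤ θ d ρ^* ‖x − y‖ for all x, y ∈ σ. -/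
open Finset

lemma coord_lin_bound (d : ℕ)
    (s : Fin (d + 1) → EuclideanSpace ℝ (Fin d))
    (b : AffineBasis (Fin (d+1)) ℝ (EuclideanSpace ℝ (Fin d))) (hb : ∀ i, b i = s i)
    (h0 : ℝ) (hh0 : 0 < h0)
    (hheight : ∀ i : Fin (d + 1),
      h0 ≤ Metric.infDist (s i) (affineSpan ℝ (s '' {j | j ≠ i}) : Set (EuclideanSpace ℝ (Fin d))))
    (i : Fin (d+1)) (u : EuclideanSpace ℝ (Fin d)) :
    |(b.coord i).linear u| ≤ ‖u‖ / h0 := by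
  set f := (b.coord i).linear with hf
  by_cases hfu : f u = 0
  · rw [hfu]
    simp only [abs_zero]
    positivity
  · set q : EuclideanSpace ℝ (Fin d) := s i - (f u)⁻¹ • u with hq
    have hq' : q = (-((f u)⁻¹ • u)) +ᵥ s i := by
      rw [hq, vadd_eq_add]; abel
    have hcq : b.coord i q = 0 := by
      rw [hq', AffineMap.map_vadd, ← hb i, b.coord_apply_eq, ← hf, map_neg, map_smul,
        smul_eq_mul, inv_mul_cancel₀ hfu, vadd_eq_add]
      norm_num
    classical
    set w : Fin (d+1) → ℝ := fun j => b.coord j q with hw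
    have hwi : w i = 0 := hcq
    have h1 : ∑ j, w j = 1 := b.sum_coord_apply_eq_one q
    have hsum : ∑ j : {j : Fin (d+1) // j ≠ i}, w j.val = 1 := by
      have h2 : ∑ j : {j : Fin (d+1) // j ≠ i}, w j.val = ∑ j ∈ univ.erase i, w j :=
        (Finset.sum_subtype (univ.erase i) (by simp) w).symm
      rw [h2, Finset.sum_erase _ hwi, h1]
    have hmem : q ∈ (affineSpan ℝ (s '' {j | j ≠ i}) : Set (EuclideanSpace ℝ (Fin d))) := by
      have hcomb : q = Finset.univ.affineCombination ℝ
          (fun j : {j : Fin (d+1) // j ≠ i} => s j.val) (fun j => w j.val) := by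
        rw [Finset.univ.affineCombination_eq_linear_combination _ _ hsum]
        have hq2 : q = ∑ j, w j • s j := by
          conv_lhs => rw [← b.affineCombination_coord_eq_self q]
          rw [Finset.univ.affineCombination_eq_linear_combination _ _ h1]
          exact Finset.sum_congr rfl fun j _ => by rw [hb]
        rw [hq2, ← Finset.sum_erase (a := i) univ (by simp [hwi])]
        exact Finset.sum_subtype (univ.erase i) (by simp) (fun j => w j • s j)
      have hrange : Set.range (fun j : {j : Fin (d+1) // j ≠ i} => s j.val)
          = s '' {j | j ≠ i} := by
        ext x
        simp [Set.mem_image]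
      rw [hcomb, ← hrange]
      exact affineCombination_mem_affineSpan hsum _
    have hdq : h0 ≤ dist (s i) q := le_trans (hheight i) (Metric.infDist_le_dist_of_mem hmem)
    have hdist : dist (s i) q = ‖u‖ / |f u| := by
      rw [dist_eq_norm, hq]
      simp [norm_smul, abs_inv, div_eq_inv_mul]
    rw [hdist] at hdq
    have hfu' : 0 < |f u| := abs_pos.mpr hfu
    rw [le_div_iff₀ hfu'] at hdq
    rw [le_div_iff₀ hh0]
    nlinarith



theorem stmt15 (d : ℕ) (hd : 0 < d)
    (s : Fin (d + 1) → EuclideanSpace ℝ (Fin d)) (hs : AffineIndependent ℝ s)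
    (h0 h1 θ ρup : ℝ) (hh0 : 0 < h0) (hρup : 0 < ρup) (hθ1 : 1 ≤ θ)
    (hdiam : h1 = Metric.diam (convexHull ℝ (Set.range s)))
    (hheight : ∀ i : Fin (d + 1),
      h0 ≤ Metric.infDist (s i) (affineSpan ℝ (s '' {j | j ≠ i}) : Set (EuclideanSpace ℝ (Fin d))))
    (hshape : h1 ≤ θ * h0)
    (v : EuclideanSpace ℝ (Fin d) →ᵃ[ℝ] ℝ)
    (hlip : ∀ i j : Fin (d + 1), |v (s i) - v (s j)| ≤ ρup * ‖s i - s j‖) :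
    (∃ ℓ : EuclideanSpace ℝ (Fin d) →L[ℝ] ℝ,
      (∀ x y : EuclideanSpace ℝ (Fin d), v x - v y = ℓ (x - y)) ∧
      ‖ℓ‖ ≤ θ * d * ρup) ∧
    ∀ x ∈ convexHull ℝ (Set.range s), ∀ y ∈ convexHull ℝ (Set.range s),
      |v x - v y| ≤ θ * d * ρup * ‖x - y‖ := by
  classical
  have htop : affineSpan ℝ (Set.range s) = ⊤ := by
    rw [hs.affineSpan_eq_top_iff_card_eq_finrank_add_one]
    simp
  let b : AffineBasis (Fin (d + 1)) ℝ (EuclideanSpace ℝ (Fin d)) := ⟨s, hs, htop⟩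
  have hb : ∀ i, b i = s i := fun _ => rfl
  -- diameter bound on vertex distances
  have hnorm : ∀ j k : Fin (d + 1), ‖s j - s k‖ ≤ h1 := by
    intro j k
    rw [← dist_eq_norm, hdiam]
    exact Metric.dist_le_diam_of_mem
      (isBounded_convexHull.mpr (Set.finite_range s).isBounded)
      (subset_convexHull ℝ _ (Set.mem_range_self j))
      (subset_convexHull ℝ _ (Set.mem_range_self k))
  have h1nn : 0 ≤ h1 := le_trans (norm_nonneg _) (hnorm 0 0)
  -- v x as barycentric combination
  have hvx : ∀ x, v x = ∑ j, b.coord j x * v (s j) := by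
    intro x
    conv_lhs => rw [← b.affineCombination_coord_eq_self x]
    rw [Finset.map_affineCombination _ _ _ (b.sum_coord_apply_eq_one x) v,
      Finset.univ.affineCombination_eq_linear_combination _ _ (b.sum_coord_apply_eq_one x)]
    simp [hb, smul_eq_mul]
  -- linear part pointwise bound
  have hpt : ∀ u : EuclideanSpace ℝ (Fin d), |v.linear u| ≤ θ * d * ρup * ‖u‖ := by
    intro u
    set c : Fin (d + 1) → ℝ := fun j => (b.coord j).linear u with hc
    have hcu : ∀ j, c j = b.coord j u - b.coord j 0 := by
      intro j
      have h2 := (b.coord j).linearMap_vsub u 0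
      simp only [vsub_eq_sub, sub_zero] at h2
      exact h2
    have hsum0 : ∑ j, c j = 0 := by
      simp only [hcu, Finset.sum_sub_distrib, b.sum_coord_apply_eq_one]
      ring
    have hvlin : v.linear u = ∑ j, c j * v (s j) := by
      have h2 := v.linearMap_vsub u 0
      simp only [vsub_eq_sub, sub_zero] at h2
      rw [h2, hvx u, hvx 0, ← Finset.sum_sub_distrib]
      exact Finset.sum_congr rfl fun j _ => by rw [hcu j]; ring
    have hvlin2 : v.linear u = ∑ j, c j * (v (s j) - v (s 0)) := by
      rw [hvlin]
      have : ∑ j, c j * (v (s j) - v (s 0))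
          = ∑ j, c j * v (s j) - (∑ j, c j) * v (s 0) := by
        rw [Finset.sum_mul, ← Finset.sum_sub_distrib]
        exact Finset.sum_congr rfl fun j _ => by ring
      rw [this, hsum0]
      ring
    have hK : (0:ℝ) ≤ (‖u‖ / h0) * (ρup * h1) := by positivity
    calc |v.linear u| = |∑ j, c j * (v (s j) - v (s 0))| := by rw [hvlin2]
      _ ≤ ∑ j, |c j * (v (s j) - v (s 0))| := Finset.abs_sum_le_sum_abs _ _
      _ ≤ ∑ j : Fin (d+1), (if j = 0 then (0:ℝ) else (‖u‖ / h0) * (ρup * h1)) := by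
          refine Finset.sum_le_sum fun j _ => ?_
          by_cases hj : j = 0
          · simp [hj]
          · rw [if_neg hj, abs_mul]
            have hcj : |c j| ≤ ‖u‖ / h0 := coord_lin_bound d s b hb h0 hh0 hheight j u
            have hvj : |v (s j) - v (s 0)| ≤ ρup * h1 := by
              refine le_trans (hlip j 0) ?_
              exact mul_le_mul_of_nonneg_left (hnorm j 0) hρup.le
            exact mul_le_mul hcj hvj (abs_nonneg _) (by positivity)
      _ = ↑d * ((‖u‖ / h0) * (ρup * h1)) := by
          have he : ∀ j : Fin (d+1), (if j = 0 then (0:ℝ) else (‖u‖ / h0) * (ρup * h1))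
              = (‖u‖ / h0) * (ρup * h1) - (if j = 0 then (‖u‖ / h0) * (ρup * h1) else 0) := by
            intro j; by_cases hj : j = 0 <;> simp [hj]
          rw [Finset.sum_congr rfl fun j _ => he j, Finset.sum_sub_distrib,
            Finset.sum_const, Finset.sum_ite_eq' Finset.univ (0 : Fin (d+1))
              (fun _ => (‖u‖ / h0) * (ρup * h1))]
          simp only [Finset.card_univ, Fintype.card_fin, Finset.mem_univ, if_true,
            nsmul_eq_mul]
          push_cast
          ring
      _ ≤ θ * ↑d * ρup * ‖u‖ := by
          have key : (‖u‖ / h0) * (ρup * h1) ≤ θ * ρup * ‖u‖ := by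
            have h2 : (‖u‖ / h0) * (ρup * h1) ≤ (‖u‖ / h0) * (ρup * (θ * h0)) := by
              apply mul_le_mul_of_nonneg_left _ (by positivity)
              exact mul_le_mul_of_nonneg_left hshape hρup.le
            have h3 : (‖u‖ / h0) * (ρup * (θ * h0)) = θ * ρup * ‖u‖ := by
              field_simp
            linarith
          calc (d : ℝ) * ((‖u‖ / h0) * (ρup * h1)) ≤ ↑d * (θ * ρup * ‖u‖) :=
                mul_le_mul_of_nonneg_left key (Nat.cast_nonneg d)
            _ = θ * ↑d * ρup * ‖u‖ := by ring
  have hnn : (0:ℝ) ≤ θ * ↑d * ρup :=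
    mul_nonneg (mul_nonneg (by linarith) (Nat.cast_nonneg d)) hρup.le
  refine ⟨⟨LinearMap.toContinuousLinearMap v.linear, ?_, ?_⟩, ?_⟩
  · intro x y
    have h2 := v.linearMap_vsub x y
    simp only [vsub_eq_sub] at h2
    simpa using h2.symm
  · apply ContinuousLinearMap.opNorm_le_bound _ hnn
    intro u
    simpa [Real.norm_eq_abs] using hpt u
  · intro x _ y _
    have h2 := v.linearMap_vsub x y
    simp only [vsub_eq_sub] at h2
    rw [← h2]
    exact hpt _
end

section
/- Sign equivalence of the original and modified Hamiltonian: assume H ∈ C(Ω̄ × ℝ^d) is convex in p, coercive (H(x,p) ≥ α‖p‖ − β, α, β > 0), and H(x,0) ≤ 0. Define ρ(x,q) = sup_{H(x,p̃)≤0}⟨p̃,q⟩ and H̃(x,p) = max_{‖q‖=1}(⟨p,q⟩ − ρ(x,q)). Then for all x ∈ Ω̄ and p ∈ ℝ^d: H̃(x,p) ≤ 0 implies H(x,p) ≤ 0, and H̃(x,p) ≥ 0 implies H(x,p) ≥ 0. -/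
open scoped RealInnerProductSpace

theorem stmt17 (d : ℕ) (hd : 0 < d) (Ω : Set (EuclideanSpace ℝ (Fin d)))
    (H : EuclideanSpace ℝ (Fin d) → EuclideanSpace ℝ (Fin d) → ℝ)
    (hHcont : ContinuousOn
      (fun xp : EuclideanSpace ℝ (Fin d) × EuclideanSpace ℝ (Fin d) => H xp.1 xp.2)
      (closure Ω ×ˢ Set.univ))
    (hHconv : ∀ x ∈ closure Ω, ConvexOn ℝ Set.univ (H x))
    (α β : ℝ) (hα : 0 < α) (hβ : 0 < β)
    (hcoer : ∀ x ∈ closure Ω, ∀ p, α * ‖p‖ - β ≤ H x p)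
    (hcompat : ∀ x ∈ closure Ω, H x 0 ≤ 0)
    (ρ : EuclideanSpace ℝ (Fin d) → EuclideanSpace ℝ (Fin d) → ℝ)
    (hρ : ∀ x ∈ closure Ω, ∀ q, ρ x q = sSup {r : ℝ | ∃ p, H x p ≤ 0 ∧ r = ⟪p, q⟫})
    (Htil : EuclideanSpace ℝ (Fin d) → EuclideanSpace ℝ (Fin d) → ℝ)
    (hHtil : ∀ x ∈ closure Ω, ∀ p, Htil x p =
      sSup {r : ℝ | ∃ q : EuclideanSpace ℝ (Fin d), ‖q‖ = 1 ∧ r = ⟪p, q⟫ - ρ x q}) :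
    ∀ x ∈ closure Ω, ∀ p : EuclideanSpace ℝ (Fin d),
      (Htil x p ≤ 0 → H x p ≤ 0) ∧ (0 ≤ Htil x p → 0 ≤ H x p) := by
  intro x hx p
  haveI : Nonempty (Fin d) := ⟨⟨0, hd⟩⟩
  have hcont : Continuous (H x) := by
    have := (hHconv x hx).continuousOn isOpen_univ
    rw [← continuousOn_univ]; exact this
  -- norm bound on the sublevel set
  have hKb : ∀ p' : EuclideanSpace ℝ (Fin d), H x p' ≤ 0 → ‖p'‖ ≤ β / α := by
    intro p' hp'
    have := hcoer x hx p'
    rw [le_div_iff₀ hα, mul_comm]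
    linarith
  -- boundedness of the ρ-defining set
  have hρbdd : ∀ q : EuclideanSpace ℝ (Fin d),
      BddAbove {r : ℝ | ∃ p', H x p' ≤ 0 ∧ r = ⟪p', q⟫} := by
    intro q
    refine ⟨(β / α) * ‖q‖, ?_⟩
    rintro r ⟨p', hp', rfl⟩
    calc ⟪p', q⟫ ≤ ‖p'‖ * ‖q‖ := real_inner_le_norm p' q
      _ ≤ (β / α) * ‖q‖ := by
          have := hKb p' hp'
          have := norm_nonneg q
          nlinarith
  have hρzero : ∀ q : EuclideanSpace ℝ (Fin d), (0 : ℝ) ≤ ρ x q := by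
    intro q
    rw [hρ x hx q]
    refine le_csSup (hρbdd q) ⟨0, hcompat x hx, by simp⟩
  -- boundedness of the Htil-defining set
  have hTbdd : BddAbove {r : ℝ | ∃ q : EuclideanSpace ℝ (Fin d), ‖q‖ = 1 ∧ r = ⟪p, q⟫ - ρ x q} := by
    refine ⟨‖p‖, ?_⟩
    rintro r ⟨q, hq, rfl⟩
    have h1 : ⟪p, q⟫ ≤ ‖p‖ * ‖q‖ := real_inner_le_norm p q
    rw [hq, mul_one] at h1
    have := hρzero q
    linarith
  constructor
  · -- Htil ≤ 0 → H ≤ 0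
    intro hT
    by_contra hHp
    push_neg at hHp
    set K : Set (EuclideanSpace ℝ (Fin d)) := {p' | H x p' ≤ 0} with hK
    have hKconv : Convex ℝ K := by
      have := (hHconv x hx).convex_le 0
      simpa [K, Set.sep_univ] using this
    have hKclosed : IsClosed K := isClosed_le hcont continuous_const
    have hpK : p ∉ K := by simp [K]; linarith
    obtain ⟨f, u, hfK, hfp⟩ := geometric_hahn_banach_closed_point hKconv hKclosed hpK
    set v : EuclideanSpace ℝ (Fin d) := (InnerProductSpace.toDual ℝ _).symm f with hv
    have hvy : ∀ y, ⟪v, y⟫ = f y := fun y => InnerProductSpace.toDual_symm_apply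
    have hf0 : f 0 < u := hfK 0 (hcompat x hx)
    rw [map_zero] at hf0
    have hvne : v ≠ 0 := by
      intro h0
      have := hvy p
      rw [h0, inner_zero_left] at this
      linarith
    have hvn : (0 : ℝ) < ‖v‖ := norm_pos_iff.mpr hvne
    set q : EuclideanSpace ℝ (Fin d) := ‖v‖⁻¹ • v with hqdef
    have hqn : ‖q‖ = 1 := by
      rw [hqdef, norm_smul, norm_inv, norm_norm, inv_mul_cancel₀ (ne_of_gt hvn)]
    have hiq : ∀ y : EuclideanSpace ℝ (Fin d), ⟪y, q⟫ = ‖v‖⁻¹ * f y := by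
      intro y
      rw [hqdef, inner_smul_right, real_inner_comm, hvy]
    have hρq : ρ x q ≤ ‖v‖⁻¹ * u := by
      rw [hρ x hx q]
      refine csSup_le ⟨0, 0, hcompat x hx, by simp⟩ ?_
      rintro r ⟨p', hp', rfl⟩
      rw [hiq p']
      have := hfK p' hp'
      have hinv : (0:ℝ) < ‖v‖⁻¹ := inv_pos.mpr hvn
      nlinarith
    have hmem : (⟪p, q⟫ - ρ x q) ∈
        {r : ℝ | ∃ q' : EuclideanSpace ℝ (Fin d), ‖q'‖ = 1 ∧ r = ⟪p, q'⟫ - ρ x q'} :=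
      ⟨q, hqn, rfl⟩
    have hle : ⟪p, q⟫ - ρ x q ≤ Htil x p := by
      rw [hHtil x hx p]; exact le_csSup hTbdd hmem
    have hpos : 0 < ⟪p, q⟫ - ρ x q := by
      rw [hiq p]
      have hinv : (0:ℝ) < ‖v‖⁻¹ := inv_pos.mpr hvn
      nlinarith
    linarith
  · -- 0 ≤ Htil → 0 ≤ H
    intro hT
    by_contra hHp
    push_neg at hHp
    have hopen : IsOpen {y : EuclideanSpace ℝ (Fin d) | H x y < 0} :=
      isOpen_lt hcont continuous_const
    obtain ⟨ε, hε, hball⟩ := Metric.isOpen_iff.mp hopen p hHp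
    have key : ∀ q : EuclideanSpace ℝ (Fin d), ‖q‖ = 1 →
        ⟪p, q⟫ - ρ x q ≤ -(ε/2) := by
      intro q hq
      have hmem : p + (ε/2) • q ∈ Metric.ball p ε := by
        rw [Metric.mem_ball, dist_eq_norm]
        simp only [add_sub_cancel_left, norm_smul, hq, mul_one]
        rw [Real.norm_of_nonneg (by linarith)]
        linarith
      have hHle : H x (p + (ε/2) • q) ≤ 0 := le_of_lt (hball hmem)
      have hρge : ⟪p, q⟫ + ε/2 ≤ ρ x q := by
        rw [hρ x hx q]
        have : ⟪p + (ε/2) • q, q⟫ = ⟪p, q⟫ + ε/2 := by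
          rw [inner_add_left, real_inner_smul_left, real_inner_self_eq_norm_sq, hq]
          ring
        rw [← this]
        exact le_csSup (hρbdd q) ⟨p + (ε/2) • q, hHle, rfl⟩
      linarith
    obtain ⟨q₀, hq₀⟩ := exists_norm_eq (EuclideanSpace ℝ (Fin d)) (le_of_lt one_pos)
    have hne : {r : ℝ | ∃ q : EuclideanSpace ℝ (Fin d), ‖q‖ = 1 ∧ r = ⟪p, q⟫ - ρ x q}.Nonempty :=
      ⟨⟪p, q₀⟫ - ρ x q₀, q₀, hq₀, rfl⟩
    have : Htil x p ≤ -(ε/2) := by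
      rw [hHtil x hx p]
      refine csSup_le hne ?_
      rintro r ⟨q, hq, rfl⟩
      exact key q hq
    linarith
end

section
/- One-dimensional Hopf–Lax update on a triangle (classic eikonal case): let σ ⊂ ℝ² be a triangle with vertices x_h, y_h, z_h, with interior angles α at y_h and β at z_h, and let u_h be affine on [y_h, z_h]. Set Δ = (u_h(z_h) − u_h(y_h))/‖z_h − y_h‖ and, if |Δ| ≤ 1, δ = arccos Δ. Then min_{y ∈ [y_h,z_h]} (u_h(y) + ‖x_h − y‖) equals: u_h(y_h) + ‖x_h − y_h‖ if cos α ≤ Δ; u_h(y_h) + cos(δ − α)·‖x_h − y_h‖ if α ≤ δ ≤ π − β; and u_h(z_h) + ‖x_h − z_h‖ if Δ ≤ cos(π − β) = −cos β. -/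
open Real EuclideanGeometry

private lemma le_of_sq_le' {v d : ℝ} (hd : 0 ≤ d) (h : v^2 ≤ d^2) : v ≤ d := by
  by_contra hc; push_neg at hc; nlinarith

private lemma lemA (a s d cA Δ : ℝ) (has : 0 ≤ a) (hs : 0 ≤ s) (hd : 0 ≤ d)
    (hca0 : -1 ≤ cA) (hca1 : cA ≤ 1) (hle : cA ≤ Δ)
    (hdsq : d^2 = a^2 - 2*s*a*cA + s^2) : a ≤ Δ*s + d := by
  rcases le_or_gt Δ 1 with h1 | h1
  · have h2 : (a - Δ*s)^2 ≤ d^2 := by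
      nlinarith [mul_nonneg (mul_nonneg has hs) (sub_nonneg.2 hle),
        mul_nonneg (mul_nonneg (sq_nonneg s) (sub_nonneg.2 h1)) (by linarith : (0:ℝ) ≤ 1 + Δ)]
    have := le_of_sq_le' hd h2; linarith
  · have h2 : (a - s)^2 ≤ d^2 := by
      nlinarith [mul_nonneg (mul_nonneg has hs) (sub_nonneg.2 hca1)]
    have := le_of_sq_le' hd h2; nlinarith

private lemma lemB (a s d cA sA Δ sδ : ℝ) (hd : 0 ≤ d)
    (hA1 : cA^2 + sA^2 = 1) (hδ1 : Δ^2 + sδ^2 = 1)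
    (hdsq : d^2 = a^2 - 2*s*a*cA + s^2) :
    a*(Δ*cA + sδ*sA) ≤ Δ*s + d := by
  have key : d^2 - (a*(Δ*cA + sδ*sA) - Δ*s)^2 = (s*sδ - a*(sδ*cA - Δ*sA))^2 := by
    rw [hdsq]
    linear_combination (-a^2) * hA1 + (-(a^2*(cA^2+sA^2)) - s^2 + 2*a*s*cA) * hδ1
  have h2 : (a*(Δ*cA + sδ*sA) - Δ*s)^2 ≤ d^2 := by nlinarith [sq_nonneg (s*sδ - a*(sδ*cA - Δ*sA))]
  have := le_of_sq_le' hd h2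
  linarith

private lemma signLemma (c1 s1 c2 s2 : ℝ) (h1 : c1^2+s1^2=1) (h2 : c2^2+s2^2=1)
    (hs1 : 0 ≤ s1) (hs2 : 0 ≤ s2) (hle : c2 ≤ c1) : 0 ≤ s2*c1 - c2*s1 := by
  have key : (s2*c1 - c2*s1)*(s2+s1) = (c1-c2)*(1+c2*c1+s1*s2) := by
    linear_combination c1*h2 - c2*h1
  have h12 : 0 ≤ 1 + c2*c1 + s1*s2 := by
    nlinarith [sq_nonneg (c1+c2), sq_nonneg s1, sq_nonneg s2, mul_nonneg hs1 hs2]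
  rcases eq_or_lt_of_le (by positivity : (0:ℝ) ≤ s2 + s1) with h | h
  · have hs1' : s1 = 0 := by linarith
    have hs2' : s2 = 0 := by linarith
    simp [hs1', hs2']
  · nlinarith [mul_nonneg (sub_nonneg.2 hle) h12]

private lemma norm_param (x y z : EuclideanSpace ℝ (Fin 2)) (t : ℝ) :
    ‖x - (y + t • (z - y))‖^2 = ‖x-y‖^2 - 2*t*(inner ℝ (x-y) (z-y)) + t^2*‖z-y‖^2 := by
  have h : x - (y + t • (z - y)) = (x - y) - t • (z - y) := by abel
  rw [h, @norm_sub_sq_real, real_inner_smul_right, norm_smul, Real.norm_eq_abs, mul_pow, sq_abs]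
  ring

private lemma inner_eq_cos (x y z : EuclideanSpace ℝ (Fin 2)) :
    (inner ℝ (x-y) (z-y)) = Real.cos (EuclideanGeometry.angle x y z) * (‖x-y‖ * ‖z-y‖) := by
  rw [EuclideanGeometry.angle, show x -ᵥ y = x - y from rfl, show z -ᵥ y = z - y from rfl,
    InnerProductGeometry.cos_angle_mul_norm_mul_norm]

private lemma vertexCase (x y z : EuclideanSpace ℝ (Fin 2)) (uy Δ : ℝ) (hxy : x ≠ y) (hyz : y ≠ z)
    (hle : Real.cos (EuclideanGeometry.angle x y z) ≤ Δ) :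
    sInf ((fun w => uy + Δ * ‖w - y‖ + ‖x - w‖) '' segment ℝ y z) = uy + ‖x - y‖ := by
  have hL : (0:ℝ) < ‖z - y‖ := norm_pos_iff.mpr (sub_ne_zero.mpr hyz.symm)
  have ha : (0:ℝ) < ‖x - y‖ := norm_pos_iff.mpr (sub_ne_zero.mpr hxy)
  set cA := Real.cos (EuclideanGeometry.angle x y z) with hcA
  have hlb : ∀ v ∈ (fun w => uy + Δ * ‖w - y‖ + ‖x - w‖) '' segment ℝ y z, uy + ‖x - y‖ ≤ v := by
    rintro v ⟨w, hw, rfl⟩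
    rw [segment_eq_image'] at hw
    obtain ⟨t, ht, rfl⟩ := hw
    have h1 : ‖y + t • (z - y) - y‖ = t * ‖z - y‖ := by
      simp [norm_smul, abs_of_nonneg ht.1]
    have hdsq : ‖x - (y + t • (z - y))‖^2
        = ‖x-y‖^2 - 2*(t*‖z-y‖)*‖x-y‖*cA + (t*‖z-y‖)^2 := by
      rw [norm_param, inner_eq_cos, ← hcA]; ring
    have := lemA (‖x-y‖) (t*‖z-y‖) (‖x - (y + t • (z - y))‖) cA Δ ha.le
      (mul_nonneg ht.1 hL.le) (norm_nonneg _) (Real.neg_one_le_cos _) (Real.cos_le_one _) hle hdsq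
    simp only [h1]
    linarith
  have hmem : uy + ‖x - y‖ ∈ (fun w => uy + Δ * ‖w - y‖ + ‖x - w‖) '' segment ℝ y z := by
    refine ⟨y, left_mem_segment ℝ y z, ?_⟩
    simp
  exact IsLeast.csInf_eq ⟨hmem, hlb⟩

private lemma lawSines (x y z : EuclideanSpace ℝ (Fin 2)) (hyz : y ≠ z) :
    ‖x-y‖ * Real.sin (EuclideanGeometry.angle x y z)
      = ‖x-z‖ * Real.sin (EuclideanGeometry.angle y z x) ∧
    ‖z-y‖ = ‖x-y‖ * Real.cos (EuclideanGeometry.angle x y z)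
      + ‖x-z‖ * Real.cos (EuclideanGeometry.angle y z x) := by
  have hL : (0:ℝ) < ‖z - y‖ := norm_pos_iff.mpr (sub_ne_zero.mpr hyz.symm)
  set a := ‖x-y‖ with ha_def
  set b := ‖x-z‖ with hb_def
  set L := ‖z-y‖ with hL_def
  set cA := Real.cos (EuclideanGeometry.angle x y z) with hcA_def
  set sA := Real.sin (EuclideanGeometry.angle x y z) with hsA_def
  set cB := Real.cos (EuclideanGeometry.angle y z x) with hcB_def
  set sB := Real.sin (EuclideanGeometry.angle y z x) with hsB_def
  set p := (inner ℝ (x-y) (z-y)) with hp_def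
  set q := (inner ℝ (x-z) (y-z)) with hq_def
  have hp : p = cA * (a * L) := inner_eq_cos x y z
  have hq : q = cB * (b * L) := by
    rw [hq_def, inner_eq_cos x z y, EuclideanGeometry.angle_comm x z y, hcB_def,
      norm_sub_rev y z]
  have hq' : q = L^2 - p := by
    rw [hq_def, show x - z = (x - y) - (z - y) from by abel,
      show y - z = -(z - y) from by abel, inner_neg_right, inner_sub_left,
      real_inner_self_eq_norm_sq, ← hp_def, ← hL_def]
    ring
  have hsum : p + q = L^2 := by rw [hq']; ring
  have hb2 : b^2 = a^2 - 2*p + L^2 := by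
    rw [hb_def, show x - z = (x - y) - (z - y) from by abel, @norm_sub_sq_real]
  have hsA : sA^2 = 1 - cA^2 := Real.sin_sq _
  have hsB : sB^2 = 1 - cB^2 := Real.sin_sq _
  constructor
  · have E1 : (a*sA)^2*L^2 = a^2*L^2 - p^2 := by
      linear_combination (a^2*L^2)*hsA + (p + cA*a*L)*hp
    have E2 : (b*sB)^2*L^2 = b^2*L^2 - q^2 := by
      linear_combination (b^2*L^2)*hsB + (q + cB*b*L)*hq
    have E3 : a^2*L^2 - p^2 = b^2*L^2 - q^2 := by
      linear_combination (-(L^2))*hb2 + (q + L^2 - p)*hsum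
    have hsq : (a*sA)^2 = (b*sB)^2 := by
      have h4 : (a*sA)^2*L^2 = (b*sB)^2*L^2 := by linarith
      exact mul_right_cancel₀ (pow_ne_zero 2 hL.ne') h4
    have h5 : 0 ≤ a*sA := mul_nonneg (norm_nonneg _)
      (Real.sin_nonneg_of_nonneg_of_le_pi (EuclideanGeometry.angle_nonneg _ _ _)
        (EuclideanGeometry.angle_le_pi _ _ _))
    have h6 : 0 ≤ b*sB := mul_nonneg (norm_nonneg _)
      (Real.sin_nonneg_of_nonneg_of_le_pi (EuclideanGeometry.angle_nonneg _ _ _)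
        (EuclideanGeometry.angle_le_pi _ _ _))
    rw [← Real.sqrt_sq h5, hsq, Real.sqrt_sq h6]
  · have h8 : cA*(a*L) + cB*(b*L) = L^2 := by rw [← hp, ← hq]; exact hsum
    have h7 : (a*cA + b*cB - L)*L = 0 := by linarith
    rcases mul_eq_zero.mp h7 with h | h
    · linarith
    · exact absurd h hL.ne'

set_option maxHeartbeats 2000000 in
theorem stmt18 (x y z : EuclideanSpace ℝ (Fin 2))
    (hnd : AffineIndependent ℝ ![x, y, z])
    (uy uz Δ : ℝ) (hΔ : Δ = (uz - uy) / ‖z - y‖)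
    (A B : ℝ) (hA : A = EuclideanGeometry.angle x y z) (hB : B = EuclideanGeometry.angle y z x) :
    (Real.cos A ≤ Δ →
      sInf ((fun w => uy + Δ * ‖w - y‖ + ‖x - w‖) '' segment ℝ y z) = uy + ‖x - y‖) ∧
    (|Δ| ≤ 1 → A ≤ Real.arccos Δ → Real.arccos Δ ≤ π - B →
      sInf ((fun w => uy + Δ * ‖w - y‖ + ‖x - w‖) '' segment ℝ y z) =
        uy + Real.cos (Real.arccos Δ - A) * ‖x - y‖) ∧
    (Δ ≤ -Real.cos B →
      sInf ((fun w => uy + Δ * ‖w - y‖ + ‖x - w‖) '' segment ℝ y z) = uz + ‖x - z‖) := by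
  have hinj := hnd.injective
  have hxy : x ≠ y := by
    intro h
    have := hinj (show ![x,y,z] 0 = ![x,y,z] 1 by simpa using h); simp at this
  have hyz : y ≠ z := by
    intro h
    have := hinj (show ![x,y,z] 1 = ![x,y,z] 2 by simpa using h); simp at this
  have hxz : x ≠ z := by
    intro h
    have := hinj (show ![x,y,z] 0 = ![x,y,z] 2 by simpa using h); simp at this
  have hncol : ¬ Collinear ℝ ({x,y,z} : Set (EuclideanSpace ℝ (Fin 2))) :=
    affineIndependent_iff_not_collinear_set.mp hnd
  have hncol' : ¬ Collinear ℝ ({y,z,x} : Set (EuclideanSpace ℝ (Fin 2))) := by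
    have hset : ({y,z,x} : Set (EuclideanSpace ℝ (Fin 2))) = {x,y,z} := by
      ext w; simp; tauto
    rw [hset]; exact hncol
  have hL : (0:ℝ) < ‖z - y‖ := norm_pos_iff.mpr (sub_ne_zero.mpr hyz.symm)
  have ha : (0:ℝ) < ‖x - y‖ := norm_pos_iff.mpr (sub_ne_zero.mpr hxy)
  have hb : (0:ℝ) < ‖x - z‖ := norm_pos_iff.mpr (sub_ne_zero.mpr hxz)
  have huz : uz = uy + Δ * ‖z - y‖ := by
    rw [hΔ]; field_simp; ring
  refine ⟨fun h => ?_, fun habs h1 h2 => ?_, fun h => ?_⟩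
  · rw [hA] at h
    exact vertexCase x y z uy Δ hxy hyz h
  · -- interior case
    obtain ⟨habs1, habs2⟩ := abs_le.mp habs
    have hcosδ : Real.cos (Real.arccos Δ) = Δ := Real.cos_arccos habs1 habs2
    have hApos : 0 < A := hA ▸ EuclideanGeometry.angle_pos_of_not_collinear hncol
    have hBpos : 0 < B := hB ▸ EuclideanGeometry.angle_pos_of_not_collinear hncol'
    have hA0 : 0 ≤ A := hApos.le
    have hAπ : A ≤ π := hA ▸ EuclideanGeometry.angle_le_pi x y z
    have hB0 : 0 ≤ B := hBpos.le
    have hBπ : B ≤ π := hB ▸ EuclideanGeometry.angle_le_pi y z x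
    have hsδpos : 0 < Real.sin (Real.arccos Δ) :=
      Real.sin_pos_of_pos_of_lt_pi (lt_of_lt_of_le hApos h1) (by linarith)
    have hΔcA : Δ ≤ Real.cos A := by
      have := Real.cos_le_cos_of_nonneg_of_le_pi hA0 (Real.arccos_le_pi Δ) h1
      rw [hcosδ] at this; exact this
    have hcBΔ : -Real.cos B ≤ Δ := by
      have h3 := Real.cos_le_cos_of_nonneg_of_le_pi (Real.arccos_nonneg Δ)
        (by linarith : π - B ≤ π) h2
      rw [Real.cos_pi_sub, hcosδ] at h3; exact h3
    have hsA0 : 0 ≤ Real.sin A := Real.sin_nonneg_of_nonneg_of_le_pi hA0 hAπ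
    have hsB0 : 0 ≤ Real.sin B := Real.sin_nonneg_of_nonneg_of_le_pi hB0 hBπ
    have hA1 : (Real.cos A)^2 + (Real.sin A)^2 = 1 := by
      rw [add_comm]; exact Real.sin_sq_add_cos_sq A
    have hB1 : (Real.cos B)^2 + (Real.sin B)^2 = 1 := by
      rw [add_comm]; exact Real.sin_sq_add_cos_sq B
    have hδ1 : Δ^2 + (Real.sin (Real.arccos Δ))^2 = 1 := by
      have h9 := Real.sin_sq_add_cos_sq (Real.arccos Δ)
      rw [hcosδ] at h9; linarith
    obtain ⟨hsin, hcos⟩ := lawSines x y z hyz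
    rw [← hA, ← hB] at hsin hcos
    have hS0 : 0 ≤ Real.sin (Real.arccos Δ) * Real.cos A - Δ * Real.sin A :=
      signLemma (Real.cos A) (Real.sin A) Δ (Real.sin (Real.arccos Δ)) hA1 hδ1 hsA0 hsδpos.le hΔcA
    have key2 : 0 ≤ Real.sin (Real.arccos Δ) * Real.cos B - (-Δ) * Real.sin B :=
      signLemma (Real.cos B) (Real.sin B) (-Δ) (Real.sin (Real.arccos Δ)) hB1
        (by linear_combination hδ1) hsB0 hsδpos.le (by linarith)
    have hS1 : ‖x-y‖*(Real.sin (Real.arccos Δ) * Real.cos A - Δ * Real.sin A)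
        ≤ Real.sin (Real.arccos Δ) * ‖z-y‖ := by
      have heq : Real.sin (Real.arccos Δ) * ‖z-y‖
          - ‖x-y‖*(Real.sin (Real.arccos Δ) * Real.cos A - Δ * Real.sin A)
          = ‖x-z‖*(Real.sin (Real.arccos Δ) * Real.cos B + Δ * Real.sin B) := by
        linear_combination Real.sin (Real.arccos Δ) * hcos + Δ * hsin
      have h10 : (0:ℝ) ≤ ‖x-z‖*(Real.sin (Real.arccos Δ) * Real.cos B + Δ * Real.sin B) :=
        mul_nonneg hb.le (by linarith)
      linarith
    obtain ⟨s, hs_def⟩ : ∃ s : ℝ, s = ‖x-y‖*(Real.sin (Real.arccos Δ) * Real.cos A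
        - Δ * Real.sin A) / Real.sin (Real.arccos Δ) := ⟨_, rfl⟩
    have hs_eq : s * Real.sin (Real.arccos Δ)
        = ‖x-y‖*(Real.sin (Real.arccos Δ) * Real.cos A - Δ * Real.sin A) := by
      rw [hs_def]; field_simp
    have hs0 : 0 ≤ s := by rw [hs_def]; exact div_nonneg (mul_nonneg ha.le hS0) hsδpos.le
    have hsL' : s ≤ ‖z-y‖ := by
      rw [hs_def, div_le_iff₀ hsδpos]; linarith [hS1]
    obtain ⟨t, ht_def⟩ : ∃ t : ℝ, t = s / ‖z-y‖ := ⟨_, rfl⟩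
    have ht0 : 0 ≤ t := ht_def ▸ div_nonneg hs0 hL.le
    have ht1 : t ≤ 1 := ht_def ▸ (div_le_one hL).mpr hsL'
    have htL : t * ‖z-y‖ = s := by rw [ht_def]; exact div_mul_cancel₀ s hL.ne'
    have hcossub : Real.cos (Real.arccos Δ - A) = Δ * Real.cos A
        + Real.sin (Real.arccos Δ) * Real.sin A := by
      rw [Real.cos_sub, hcosδ]
    have hdsq : ‖x - (y + t • (z - y))‖^2 = ‖x-y‖^2 - 2*s*‖x-y‖*(Real.cos A) + s^2 := by
      rw [norm_param, inner_eq_cos, ← hA, ← htL]; ring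
    have hGm : ‖x - (y + t • (z - y))‖^2 * (Real.sin (Real.arccos Δ))^2
        = (‖x-y‖ * Real.sin A)^2 := by
      rw [hdsq]
      linear_combination (s * Real.sin (Real.arccos Δ)
          + ‖x-y‖*(Real.sin (Real.arccos Δ) * Real.cos A - Δ * Real.sin A)
          - 2*‖x-y‖*(Real.cos A)*(Real.sin (Real.arccos Δ))) * hs_eq
        + (-(‖x-y‖^2*(Real.sin (Real.arccos Δ))^2)) * hA1
        + (‖x-y‖^2*(Real.sin A)^2) * hδ1
    have hdval : ‖x - (y + t • (z - y))‖ = ‖x-y‖ * Real.sin A / Real.sin (Real.arccos Δ) := by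
      have hx1 : ‖x - (y + t • (z - y))‖^2
          = (‖x-y‖ * Real.sin A / Real.sin (Real.arccos Δ))^2 := by
        rw [div_pow, eq_div_iff (by positivity)]
        exact hGm
      rw [← Real.sqrt_sq (norm_nonneg _), hx1, Real.sqrt_sq (by positivity)]
    have hmem : uy + Real.cos (Real.arccos Δ - A) * ‖x - y‖
        ∈ (fun w => uy + Δ * ‖w - y‖ + ‖x - w‖) '' segment ℝ y z := by
      refine ⟨y + t • (z - y), ?_, ?_⟩
      · rw [segment_eq_image']; exact ⟨t, ⟨ht0, ht1⟩, rfl⟩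
      · simp only
        have hh1 : ‖y + t • (z - y) - y‖ = t * ‖z - y‖ := by
          simp [norm_smul, abs_of_nonneg ht0]
        rw [hh1, htL, hdval, hcossub]
        have hval2 : Δ*(s*Real.sin (Real.arccos Δ)) + ‖x-y‖*Real.sin A
            = (Δ*Real.cos A + Real.sin (Real.arccos Δ)*Real.sin A)*‖x-y‖*Real.sin (Real.arccos Δ) := by
          linear_combination Δ * hs_eq + (-(‖x-y‖ * Real.sin A)) * hδ1
        field_simp
        linear_combination hval2
    have hlb : ∀ v ∈ (fun w => uy + Δ * ‖w - y‖ + ‖x - w‖) '' segment ℝ y z,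
        uy + Real.cos (Real.arccos Δ - A) * ‖x - y‖ ≤ v := by
      rintro v ⟨w, hw, rfl⟩
      rw [segment_eq_image'] at hw
      obtain ⟨r, hr, rfl⟩ := hw
      have hh1 : ‖y + r • (z - y) - y‖ = r * ‖z - y‖ := by
        simp [norm_smul, abs_of_nonneg hr.1]
      have hdsq2 : ‖x - (y + r • (z - y))‖^2
          = ‖x-y‖^2 - 2*(r*‖z-y‖)*‖x-y‖*(Real.cos A) + (r*‖z-y‖)^2 := by
        rw [norm_param, inner_eq_cos, ← hA]; ring
      have hlemB := lemB (‖x-y‖) (r*‖z-y‖) (‖x - (y + r • (z - y))‖) (Real.cos A) (Real.sin A)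
        Δ (Real.sin (Real.arccos Δ)) (norm_nonneg _) hA1 hδ1 hdsq2
      simp only [hh1]
      rw [hcossub]
      linarith [hlemB]
    exact IsLeast.csInf_eq ⟨hmem, hlb⟩
  · -- far vertex case
    have himg : ((fun w => uy + Δ * ‖w - y‖ + ‖x - w‖) '' segment ℝ y z)
        = ((fun w => (uy + Δ*‖z-y‖) + (-Δ) * ‖w - z‖ + ‖x - w‖) '' segment ℝ z y) := by
      rw [show segment ℝ z y = segment ℝ y z from segment_symm ℝ z y]
      apply Set.image_congr
      intro w hw
      rw [segment_eq_image'] at hw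
      obtain ⟨t, ht, rfl⟩ := hw
      have hh1 : ‖y + t • (z - y) - y‖ = t * ‖z - y‖ := by
        simp [norm_smul, abs_of_nonneg ht.1]
      have hh2 : ‖y + t • (z - y) - z‖ = (1-t) * ‖z - y‖ := by
        have he : y + t • (z - y) - z = t • (z - y) - (1:ℝ) • (z - y) := by
          rw [one_smul]; abel
        rw [he, ← sub_smul, norm_smul, Real.norm_eq_abs, abs_of_nonpos (by linarith [ht.2])]
        ring
      rw [hh1, hh2]; ring
    have hcond : Real.cos (EuclideanGeometry.angle x z y) ≤ -Δ := by
      rw [EuclideanGeometry.angle_comm x z y, ← hB]; linarith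
    rw [himg, vertexCase x z y (uy + Δ*‖z-y‖) (-Δ) hxz hyz.symm hcond, huz]
end
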